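/- arXiv:2508.20548 — 4 statements merged into one kernel-verified Lean document; each statement's English description precedes it below -/
import Mathlib

section
/- Let p be a prime, n ≥ 1, α > 0, N ∈ ℤ, Ω = B_N ⊆ ℚ_p^n. For every h ∈ L²(Ω) there exists a function v ∈ H^α_0(Ω), unique up to equality almost everywhere on K^n, such that ∫_Ω v φ dx + ∬_{(K^n×K^n)∖(Ω^c×Ω^c)} (v(x)−v(y))(φ(x)−φ(y))/‖x−y‖^{n+α} dx dy = ∫_Ω h φ dx for every φ ∈ H^α_0(Ω); moreover ‖v‖_{H^α_0(Ω)} ≤ ‖h‖_{L²(Ω)}. -/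
noncomputable section

open MeasureTheory Metric ENNReal

instance (p : ℕ) [Fact p.Prime] : MeasurableSpace ℚ_[p] := borel _
instance (p : ℕ) [Fact p.Prime] : BorelSpace ℚ_[p] := ⟨rfl⟩

/-- The closed unit ball `ℤ_p ⊆ ℚ_p` as a positive compact set. -/
def padicUnitBall (p : ℕ) [Fact p.Prime] : TopologicalSpace.PositiveCompacts ℚ_[p] where
  carrier := Metric.closedBall 0 1
  isCompact' := isCompact_closedBall 0 1
  interior_nonempty' := by
    rw [IsOpen.interior_eq (IsUltrametricDist.isOpen_closedBall 0 one_ne_zero)]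
    exact ⟨0, Metric.mem_closedBall_self zero_le_one⟩

/-- Additive Haar measure on `ℚ_p`, normalized so that `ℤ_p` has measure `1`. -/
def padicHaar (p : ℕ) [Fact p.Prime] : Measure ℚ_[p] :=
  Measure.addHaarMeasure (padicUnitBall p)

/-- The product Haar measure on `K^n = ℚ_p^n`, normalized so that `ℤ_p^n` has measure `1`. -/
def padicHaarN (p : ℕ) [Fact p.Prime] (n : ℕ) : Measure (Fin n → ℚ_[p]) :=
  Measure.pi fun _ => padicHaar p

/-- The ball `B_N = {x ∈ K^n : ‖x‖ ≤ p^N}`, where `‖x‖ = max |x_j|_p` is the sup norm. -/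
def Bball (p : ℕ) [Fact p.Prime] (n : ℕ) (N : ℤ) : Set (Fin n → ℚ_[p]) :=
  {x | ‖x‖ ≤ (p : ℝ) ^ N}

/-- The constant `c_{n,α} = (p^α − 1)/(1 − p^{−α−n})`. -/
def cna (p n : ℕ) (α : ℝ) : ℝ := ((p : ℝ) ^ α - 1) / (1 - (p : ℝ) ^ (-α - (n : ℝ)))

/-- The Vladimirov–Taibleson operator `(D^{α,n}u)(x) = c_{n,α} ∫ (u(x)−u(y))/‖x−y‖^{n+α} dy`. -/
def Dop (p : ℕ) [Fact p.Prime] (n : ℕ) (α : ℝ) (u : (Fin n → ℚ_[p]) → ℝ)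
    (x : Fin n → ℚ_[p]) : ℝ :=
  cna p n α * ∫ y, (u x - u y) / ‖x - y‖ ^ ((n : ℝ) + α) ∂padicHaarN p n

/-- The nonlocal normal derivative `(N_α u)(x) = c_{n,α} ∫_Ω (u(x)−u(y))/‖x−y‖^{n+α} dy`. -/
def Nop (p : ℕ) [Fact p.Prime] (n : ℕ) (α : ℝ) (N : ℤ) (u : (Fin n → ℚ_[p]) → ℝ)
    (x : Fin n → ℚ_[p]) : ℝ :=
  cna p n α * ∫ y in Bball p n N, (u x - u y) / ‖x - y‖ ^ ((n : ℝ) + α) ∂padicHaarN p n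

/-- The squared norm of the space `H^α_ρ(Ω)`, `Ω = B_N` (value in `[0,∞]`). -/
def normSqH (p : ℕ) [Fact p.Prime] (n : ℕ) (α : ℝ) (N : ℤ)
    (ρ u : (Fin n → ℚ_[p]) → ℝ) : ℝ≥0∞ :=
  (∫⁻ x in Bball p n N, ENNReal.ofReal ((u x) ^ 2) ∂padicHaarN p n)
  + (∫⁻ x in (Bball p n N)ᶜ, ENNReal.ofReal (|ρ x| * (u x) ^ 2) ∂padicHaarN p n)
  + ∫⁻ z in ((Bball p n N)ᶜ ×ˢ (Bball p n N)ᶜ)ᶜ,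
      ENNReal.ofReal ((u z.1 - u z.2) ^ 2 / ‖z.1 - z.2‖ ^ ((n : ℝ) + α))
      ∂((padicHaarN p n).prod (padicHaarN p n))

/-- Membership in `H^α_ρ(Ω)`: measurable with finite `H^α_ρ(Ω)`-norm. -/
def MemH (p : ℕ) [Fact p.Prime] (n : ℕ) (α : ℝ) (N : ℤ)
    (ρ u : (Fin n → ℚ_[p]) → ℝ) : Prop :=
  Measurable u ∧ normSqH p n α N ρ u < ⊤

/-- `u` is a weak solution of the Neumann problem `D^{α,n}u = f` on `Ω`,
`N_α u = g` on `Ω^c`, where `Ω = B_N`. -/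
def IsWeakSolution (p : ℕ) [Fact p.Prime] (n : ℕ) (α : ℝ) (N : ℤ)
    (f g u : (Fin n → ℚ_[p]) → ℝ) : Prop :=
  MemH p n α N g u ∧
  ∀ v : (Fin n → ℚ_[p]) → ℝ, MemH p n α N g v →
    cna p n α / 2 *
      ∫ z in ((Bball p n N)ᶜ ×ˢ (Bball p n N)ᶜ)ᶜ,
        (u z.1 - u z.2) * (v z.1 - v z.2) / ‖z.1 - z.2‖ ^ ((n : ℝ) + α)
        ∂((padicHaarN p n).prod (padicHaarN p n))
    = (∫ x in Bball p n N, f x * v x ∂padicHaarN p n)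
      + ∫ y in (Bball p n N)ᶜ, g y * v y ∂padicHaarN p n

/-! ### Auxiliary development -/

instance (p : ℕ) [Fact p.Prime] : (padicHaar p).IsAddHaarMeasure :=
  Measure.isAddHaarMeasure_addHaarMeasure _

instance (p : ℕ) [Fact p.Prime] (n : ℕ) : SigmaFinite (padicHaarN p n) := by
  unfold padicHaarN; infer_instance

instance (p : ℕ) [Fact p.Prime] (n : ℕ) : (padicHaarN p n).IsOpenPosMeasure := by
  unfold padicHaarN; infer_instance

namespace PadicNeumann

variable (p : ℕ) [Fact p.Prime] (n : ℕ) (α : ℝ) (N : ℤ)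

abbrev Rset : Set ((Fin n → ℚ_[p]) × (Fin n → ℚ_[p])) :=
  ((Bball p n N)ᶜ ×ˢ (Bball p n N)ᶜ)ᶜ

abbrev kerf : ((Fin n → ℚ_[p]) × (Fin n → ℚ_[p])) → ℝ :=
  fun z => ‖z.1 - z.2‖ ^ ((n : ℝ) + α)

abbrev wden : ((Fin n → ℚ_[p]) × (Fin n → ℚ_[p])) → ℝ≥0∞ :=
  fun z => ENNReal.ofReal ((kerf p n α z)⁻¹)

abbrev muOm : Measure (Fin n → ℚ_[p]) := (padicHaarN p n).restrict (Bball p n N)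

abbrev nuM : Measure ((Fin n → ℚ_[p]) × (Fin n → ℚ_[p])) :=
  ((((padicHaarN p n).prod (padicHaarN p n))).restrict (Rset p n N)).withDensity (wden p n α)

abbrev Dfn (u : (Fin n → ℚ_[p]) → ℝ) : ((Fin n → ℚ_[p]) × (Fin n → ℚ_[p])) → ℝ :=
  fun z => u z.1 - u z.2

lemma measurableSet_Bball : MeasurableSet (Bball p n N) :=
  (isClosed_le continuous_norm continuous_const).measurableSet

lemma measurableSet_Rset : MeasurableSet (Rset p n N) :=
  (((measurableSet_Bball p n N).compl.prod (measurableSet_Bball p n N).compl)).compl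

lemma continuous_kerf (hα : 0 < α) : Continuous (kerf p n α) :=
  (continuous_fst.sub continuous_snd).norm.rpow_const
    (fun _ => Or.inr (by positivity))

lemma measurable_kerf (hα : 0 < α) : Measurable (kerf p n α) :=
  (continuous_kerf p n α hα).measurable

lemma measurable_wden (hα : 0 < α) : Measurable (wden p n α) :=
  ENNReal.measurable_ofReal.comp (measurable_kerf p n α hα).inv

lemma kerf_nonneg (z) : 0 ≤ kerf p n α z := Real.rpow_nonneg (norm_nonneg _) _

lemma kerf_pos {z : (Fin n → ℚ_[p]) × (Fin n → ℚ_[p])} (hz : z.1 ≠ z.2) :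
    0 < kerf p n α z :=
  Real.rpow_pos_of_pos (norm_pos_iff.mpr (sub_ne_zero.mpr hz)) _

lemma wden_ne_zero {z : (Fin n → ℚ_[p]) × (Fin n → ℚ_[p])} (hz : z.1 ≠ z.2) :
    wden p n α z ≠ 0 := by
  simp only [wden, ne_eq, ENNReal.ofReal_eq_zero, not_le]
  exact inv_pos.mpr (kerf_pos p n α hz)

lemma measure_Bball_ne_zero : padicHaarN p n (Bball p n N) ≠ 0 := by
  have hp : (0:ℝ) < (p:ℝ)^N := zpow_pos (by exact_mod_cast (Fact.out : p.Prime).pos) N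
  have : Metric.ball (0 : Fin n → ℚ_[p]) ((p:ℝ)^N) ⊆ Bball p n N := by
    intro x hx
    simp only [Metric.mem_ball, dist_zero_right] at hx
    exact le_of_lt hx
  have h2 := (Metric.isOpen_ball).measure_pos (padicHaarN p n)
    ⟨0, Metric.mem_ball_self hp⟩
  exact fun h0 => absurd (measure_mono_null this h0) h2.ne'

lemma measurable_Dfn {u : (Fin n → ℚ_[p]) → ℝ} (hu : Measurable u) :
    Measurable (Dfn p n u) :=
  (hu.comp measurable_fst).sub (hu.comp measurable_snd)


lemma ofReal_sq (r : ℝ) : ENNReal.ofReal (r^2) = (‖r‖₊ : ℝ≥0∞)^2 := by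
  rw [← sq_abs, ENNReal.ofReal_pow (abs_nonneg r), ← Real.enorm_eq_ofReal_abs]
  rfl

lemma lint_sq {γ : Type*} [MeasurableSpace γ] (f : γ → ℝ) (m : Measure γ) :
    ∫⁻ x, ((‖f x‖₊ : ℝ≥0∞))^2 ∂m = (eLpNorm f 2 m)^2 := by
  rw [eLpNorm_eq_lintegral_rpow_enorm_toReal two_ne_zero ENNReal.ofNat_ne_top]
  rw [← ENNReal.rpow_natCast _ 2, ← ENNReal.rpow_mul]
  norm_num
  rfl

lemma normSqH_eq (hα : 0 < α) {u : (Fin n → ℚ_[p]) → ℝ} (hu : Measurable u) :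
    normSqH p n α N (fun _ => 0) u
      = (eLpNorm u 2 (muOm p n N))^2 + (eLpNorm (Dfn p n u) 2 (nuM p n α N))^2 := by
  unfold normSqH
  have h2 : (∫⁻ x in (Bball p n N)ᶜ,
      ENNReal.ofReal (|(0:ℝ)| * (u x) ^ 2) ∂padicHaarN p n) = 0 := by
    simp
  rw [h2, add_zero]
  congr 1
  · rw [← lint_sq]
    exact lintegral_congr fun x => ofReal_sq (u x)
  · rw [← lint_sq]
    have hmeas : Measurable (fun z => ((‖Dfn p n u z‖₊ : ℝ≥0∞))^2) :=
      ((measurable_Dfn p n hu).nnnorm.coe_nnreal_ennreal).pow_const 2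
    rw [lintegral_withDensity_eq_lintegral_mul _ (measurable_wden p n α hα) hmeas]
    apply lintegral_congr
    intro z
    show ENNReal.ofReal ((u z.1 - u z.2) ^ 2 / kerf p n α z)
      = wden p n α z * (‖Dfn p n u z‖₊ : ℝ≥0∞)^2
    rw [div_eq_mul_inv, mul_comm, ENNReal.ofReal_mul (inv_nonneg.mpr (kerf_nonneg p n α z))]
    rw [ofReal_sq]

lemma memH_iff (hα : 0 < α) {u : (Fin n → ℚ_[p]) → ℝ} :
    MemH p n α N (fun _ => 0) u ↔
      Measurable u ∧ MemLp u 2 (muOm p n N) ∧ MemLp (Dfn p n u) 2 (nuM p n α N) := by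
  constructor
  · rintro ⟨hm, hfin⟩
    rw [normSqH_eq p n α N hα hm] at hfin
    have hfin1 := (ENNReal.add_lt_top.mp hfin).1
    have hfin2 := (ENNReal.add_lt_top.mp hfin).2
    refine ⟨hm, ⟨hm.aestronglyMeasurable, ?_⟩, ⟨(measurable_Dfn p n hm).aestronglyMeasurable, ?_⟩⟩
    · by_contra hc
      rw [lt_top_iff_ne_top, not_not] at hc
      rw [hc] at hfin1
      simp [ENNReal.top_pow] at hfin1
    · by_contra hc
      rw [lt_top_iff_ne_top, not_not] at hc
      rw [hc] at hfin2
      simp [ENNReal.top_pow] at hfin2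
  · rintro ⟨hm, h1, h2⟩
    refine ⟨hm, ?_⟩
    rw [normSqH_eq p n α N hα hm]
    exact ENNReal.add_lt_top.mpr ⟨ENNReal.pow_lt_top h1.2, ENNReal.pow_lt_top h2.2⟩

lemma inner_L2_eq {γ : Type*} [MeasurableSpace γ] (m : Measure γ) (f g : γ → ℝ)
    (hf : MemLp f 2 m) (hg : MemLp g 2 m) :
    (inner ℝ (hf.toLp f) (hg.toLp g) : ℝ) = ∫ x, f x * g x ∂m := by
  rw [L2.inner_def]
  apply integral_congr_ae
  filter_upwards [hf.coeFn_toLp, hg.coeFn_toLp] with x h1 h2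
  rw [h1, h2]
  simp [RCLike.inner_apply, conj_trivial]
  ring

lemma integral_nu_eq (hα : 0 < α) (G : ((Fin n → ℚ_[p]) × (Fin n → ℚ_[p])) → ℝ) :
    ∫ z, G z ∂(nuM p n α N)
      = ∫ z in Rset p n N, G z / kerf p n α z
          ∂((padicHaarN p n).prod (padicHaarN p n)) := by
  have hw : Measurable (fun z => ((kerf p n α z)⁻¹).toNNReal) :=
    (measurable_kerf p n α hα).inv.real_toNNReal
  have : nuM p n α N
      = ((((padicHaarN p n).prod (padicHaarN p n))).restrict (Rset p n N)).withDensity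
          (fun z => (((kerf p n α z)⁻¹).toNNReal : ℝ≥0∞)) := rfl
  rw [this, integral_withDensity_eq_integral_smul hw]
  apply integral_congr_ae
  filter_upwards with z
  rw [NNReal.smul_def, smul_eq_mul, Real.coe_toNNReal _ (inv_nonneg.mpr (kerf_nonneg p n α z)),
    div_eq_mul_inv, mul_comm]


lemma muOm_ae_neBot : (MeasureTheory.ae (muOm p n N)).NeBot := by
  rw [ae_neBot]
  intro h0
  apply measure_Bball_ne_zero p n N
  have := congrArg (fun m : Measure (Fin n → ℚ_[p]) => m Set.univ) h0
  simpa [Measure.restrict_apply_univ] using this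

lemma mem_Rset_of {x y : Fin n → ℚ_[p]} (hy : y ∈ Bball p n N) : (x, y) ∈ Rset p n N :=
  fun hc => hc.2 hy

lemma limit_exists (hα : 0 < α)
    (v : ℕ → (Fin n → ℚ_[p]) → ℝ) (hv : ∀ k, Measurable (v k))
    (f : (Fin n → ℚ_[p]) → ℝ) (hfm : AEStronglyMeasurable f (muOm p n N))
    (g : ((Fin n → ℚ_[p]) × (Fin n → ℚ_[p])) → ℝ) (hgm : AEStronglyMeasurable g (nuM p n α N))
    (h1 : Filter.Tendsto (fun k => eLpNorm (v k - f) 2 (muOm p n N)) Filter.atTop (nhds 0))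
    (h2 : Filter.Tendsto (fun k => eLpNorm (Dfn p n (v k) - g) 2 (nuM p n α N))
      Filter.atTop (nhds 0)) :
    ∃ V : (Fin n → ℚ_[p]) → ℝ, Measurable V ∧ V =ᵐ[muOm p n N] f
      ∧ Dfn p n V =ᵐ[nuM p n α N] g := by
  have tim1 : TendstoInMeasure (muOm p n N) v Filter.atTop f :=
    tendstoInMeasure_of_tendsto_eLpNorm (by norm_num)
      (fun k => (hv k).aestronglyMeasurable) hfm h1
  obtain ⟨ns, hns, hae1⟩ := tim1.exists_seq_tendsto_ae
  have tim2 : TendstoInMeasure (nuM p n α N) (fun k => Dfn p n (v k)) Filter.atTop g :=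
    tendstoInMeasure_of_tendsto_eLpNorm (by norm_num)
      (fun k => (measurable_Dfn p n (hv k)).aestronglyMeasurable) hgm h2
  have tim2' : TendstoInMeasure (nuM p n α N) (fun i => Dfn p n (v (ns i))) Filter.atTop g :=
    fun ε hε => (tim2 ε hε).comp hns.tendsto_atTop
  obtain ⟨ms, hms, hae2⟩ := tim2'.exists_seq_tendsto_ae
  set u : ℕ → (Fin n → ℚ_[p]) → ℝ := fun i => v (ns (ms i)) with hu_def
  have hae1' : ∀ᵐ x ∂muOm p n N,
      Filter.Tendsto (fun i => u i x) Filter.atTop (nhds (f x)) :=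
    hae1.mono fun x hx => hx.comp hms.tendsto_atTop
  have A : ∀ᵐ x ∂padicHaarN p n, x ∈ Bball p n N →
      Filter.Tendsto (fun i => u i x) Filter.atTop (nhds (f x)) :=
    (ae_restrict_iff' (measurableSet_Bball p n N)).mp hae1'
  have B : ∀ᵐ z ∂nuM p n α N,
      Filter.Tendsto (fun i => Dfn p n (u i) z) Filter.atTop (nhds (g z)) := hae2
  have B2 : ∀ᵐ z ∂(padicHaarN p n).prod (padicHaarN p n), z ∈ Rset p n N →
      wden p n α z ≠ 0 →
      Filter.Tendsto (fun i => Dfn p n (u i) z) Filter.atTop (nhds (g z)) :=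
    (ae_restrict_iff' (measurableSet_Rset p n N)).mp
      ((ae_withDensity_iff (measurable_wden p n α hα)).mp B)
  have C : ∀ᵐ x ∂padicHaarN p n, ∀ᵐ y ∂padicHaarN p n,
      ((x, y) ∈ Rset p n N → wden p n α (x, y) ≠ 0 →
      Filter.Tendsto (fun i => Dfn p n (u i) (x, y)) Filter.atTop (nhds (g (x, y)))) :=
    Measure.ae_ae_of_ae_prod B2
  have D : ∀ᵐ x ∂padicHaarN p n, ∃ l : ℝ,
      Filter.Tendsto (fun i => u i x) Filter.atTop (nhds l) := by
    filter_upwards [A, C] with x hA hC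
    by_cases hx : x ∈ Bball p n N
    · exact ⟨f x, hA hx⟩
    · have hres : ∀ᵐ y ∂muOm p n N, y ∈ Bball p n N ∧
          Filter.Tendsto (fun i => u i y) Filter.atTop (nhds (f y)) ∧
          ((x, y) ∈ Rset p n N → wden p n α (x, y) ≠ 0 →
            Filter.Tendsto (fun i => Dfn p n (u i) (x, y)) Filter.atTop (nhds (g (x, y)))) :=
        (ae_restrict_mem (measurableSet_Bball p n N)).and
          (hae1'.and (ae_restrict_of_ae hC))
      haveI := muOm_ae_neBot p n N
      obtain ⟨y, hy1, hy2, hy3⟩ := hres.exists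
      have hxy : (x, y) ∈ Rset p n N := mem_Rset_of p n N hy1
      have hxney : x ≠ y := fun h => hx (h ▸ hy1)
      have ht := hy3 hxy (wden_ne_zero p n α hxney)
      refine ⟨g (x, y) + f y, ?_⟩
      have := ht.add hy2
      simp only [Dfn] at this
      simpa using this
  obtain ⟨V, hVm, hVt⟩ :=
    measurable_limit_of_tendsto_metrizable_ae (fun k => (hv (ns (ms k))).aemeasurable) D
  refine ⟨V, hVm, ?_, ?_⟩
  · filter_upwards [ae_restrict_of_ae hVt, hae1'] with x e1 e2
    exact tendsto_nhds_unique e1 e2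
  · have hfst := (Measure.quasiMeasurePreserving_fst
      (μ := padicHaarN p n) (ν := padicHaarN p n)).ae hVt
    have hsnd := (Measure.quasiMeasurePreserving_snd
      (μ := padicHaarN p n) (ν := padicHaarN p n)).ae hVt
    have hDV : ∀ᵐ z ∂(padicHaarN p n).prod (padicHaarN p n),
        Filter.Tendsto (fun i => Dfn p n (u i) z) Filter.atTop (nhds (Dfn p n V z)) :=
      (hfst.and hsnd).mono fun z hz => hz.1.sub hz.2
    have hDV' : ∀ᵐ z ∂nuM p n α N,
        Filter.Tendsto (fun i => Dfn p n (u i) z) Filter.atTop (nhds (Dfn p n V z)) :=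
      ((withDensity_absolutelyContinuous _ _).ae_le (ae_restrict_of_ae hDV))
    filter_upwards [hDV', B] with z e1 e2
    exact tendsto_nhds_unique e1 e2

lemma eq_ae_zero (hα : 0 < α) {φ : (Fin n → ℚ_[p]) → ℝ}
    (h1 : φ =ᵐ[muOm p n N] 0) (h2 : Dfn p n φ =ᵐ[nuM p n α N] 0) :
    φ =ᵐ[padicHaarN p n] 0 := by
  have A : ∀ᵐ x ∂padicHaarN p n, x ∈ Bball p n N → φ x = 0 :=
    (ae_restrict_iff' (measurableSet_Bball p n N)).mp h1
  have B2 : ∀ᵐ z ∂(padicHaarN p n).prod (padicHaarN p n), z ∈ Rset p n N →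
      wden p n α z ≠ 0 → Dfn p n φ z = 0 :=
    (ae_restrict_iff' (measurableSet_Rset p n N)).mp
      ((ae_withDensity_iff (measurable_wden p n α hα)).mp h2)
  have C : ∀ᵐ x ∂padicHaarN p n, ∀ᵐ y ∂padicHaarN p n,
      ((x, y) ∈ Rset p n N → wden p n α (x, y) ≠ 0 → Dfn p n φ (x, y) = 0) :=
    Measure.ae_ae_of_ae_prod B2
  filter_upwards [A, C] with x hA hC
  by_cases hx : x ∈ Bball p n N
  · exact hA hx
  · have hres : ∀ᵐ y ∂muOm p n N, y ∈ Bball p n N ∧ φ y = 0 ∧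
        ((x, y) ∈ Rset p n N → wden p n α (x, y) ≠ 0 → Dfn p n φ (x, y) = 0) :=
      (ae_restrict_mem (measurableSet_Bball p n N)).and (h1.and (ae_restrict_of_ae hC))
    haveI := muOm_ae_neBot p n N
    obtain ⟨y, hy1, hy2, hy3⟩ := hres.exists
    have hxney : x ≠ y := fun h => hx (h ▸ hy1)
    have := hy3 (mem_Rset_of p n N hy1) (wden_ne_zero p n α hxney)
    simp only [Dfn] at this
    show φ x = 0
    rw [hy2] at this
    linarith


abbrev EH := WithLp 2 (Lp ℝ 2 (muOm p n N) × Lp ℝ 2 (nuM p n α N))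

def SE {u : (Fin n → ℚ_[p]) → ℝ} (h1 : MemLp u 2 (muOm p n N))
    (h2 : MemLp (Dfn p n u) 2 (nuM p n α N)) : EH p n α N :=
  (WithLp.equiv 2 _).symm (h1.toLp u, h2.toLp _)

lemma SE_fst {u : (Fin n → ℚ_[p]) → ℝ} (h1 : MemLp u 2 (muOm p n N))
    (h2 : MemLp (Dfn p n u) 2 (nuM p n α N)) :
    (SE p n α N h1 h2).fst = h1.toLp u := rfl

lemma SE_snd {u : (Fin n → ℚ_[p]) → ℝ} (h1 : MemLp u 2 (muOm p n N))
    (h2 : MemLp (Dfn p n u) 2 (nuM p n α N)) :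
    (SE p n α N h1 h2).snd = h2.toLp (Dfn p n u) := rfl

lemma bilin_eq (hα : 0 < α) {u v : (Fin n → ℚ_[p]) → ℝ}
    (hu1 : MemLp u 2 (muOm p n N)) (hu2 : MemLp (Dfn p n u) 2 (nuM p n α N))
    (hv1 : MemLp v 2 (muOm p n N)) (hv2 : MemLp (Dfn p n v) 2 (nuM p n α N)) :
    (∫ x in Bball p n N, u x * v x ∂padicHaarN p n)
      + (∫ z in ((Bball p n N)ᶜ ×ˢ (Bball p n N)ᶜ)ᶜ,
          (u z.1 - u z.2) * (v z.1 - v z.2) / ‖z.1 - z.2‖ ^ ((n : ℝ) + α)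
          ∂((padicHaarN p n).prod (padicHaarN p n)))
      = inner ℝ (SE p n α N hu1 hu2) (SE p n α N hv1 hv2) := by
  rw [WithLp.prod_inner_apply, WithLp.ofLp_fst, WithLp.ofLp_snd, WithLp.ofLp_fst, WithLp.ofLp_snd,
    SE_fst, SE_snd, SE_fst, SE_snd]
  rw [inner_L2_eq _ _ _ hu1 hv1, inner_L2_eq _ _ _ hu2 hv2]
  rw [integral_nu_eq p n α N hα]

end PadicNeumann


set_option maxHeartbeats 2000000 in
set_option synthInstance.maxHeartbeats 400000 in
open PadicNeumann Filter in
/-- For every `h ∈ L²(Ω)` there is a unique (up to a.e. equality)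
`v ∈ H^α_0(Ω)` with
`∫_Ω v φ dx + ∬ (v(x)−v(y))(φ(x)−φ(y))/‖x−y‖^{n+α} dx dy = ∫_Ω h φ dx` for all
`φ ∈ H^α_0(Ω)`, and `‖v‖_{H^α_0(Ω)} ≤ ‖h‖_{L²(Ω)}`. -/
theorem padic_neumann_riesz (p : ℕ) [Fact p.Prime] (n : ℕ) (hn : 1 ≤ n)
    (α : ℝ) (hα : 0 < α) (N : ℤ)
    (h : (Fin n → ℚ_[p]) → ℝ) (hhmeas : Measurable h)
    (hhL2 : (∫⁻ x in Bball p n N, ENNReal.ofReal ((h x) ^ 2) ∂padicHaarN p n) < ⊤) :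
    ∃ v : (Fin n → ℚ_[p]) → ℝ,
      MemH p n α N (fun _ => 0) v ∧
      (∀ φ : (Fin n → ℚ_[p]) → ℝ, MemH p n α N (fun _ => 0) φ →
        (∫ x in Bball p n N, v x * φ x ∂padicHaarN p n)
          + (∫ z in ((Bball p n N)ᶜ ×ˢ (Bball p n N)ᶜ)ᶜ,
              (v z.1 - v z.2) * (φ z.1 - φ z.2) / ‖z.1 - z.2‖ ^ ((n : ℝ) + α)
              ∂((padicHaarN p n).prod (padicHaarN p n)))
          = ∫ x in Bball p n N, h x * φ x ∂padicHaarN p n) ∧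
      normSqH p n α N (fun _ => 0) v
        ≤ (∫⁻ x in Bball p n N, ENNReal.ofReal ((h x) ^ 2) ∂padicHaarN p n) ∧
      (∀ v' : (Fin n → ℚ_[p]) → ℝ,
        MemH p n α N (fun _ => 0) v' →
        (∀ φ : (Fin n → ℚ_[p]) → ℝ, MemH p n α N (fun _ => 0) φ →
          (∫ x in Bball p n N, v' x * φ x ∂padicHaarN p n)
            + (∫ z in ((Bball p n N)ᶜ ×ˢ (Bball p n N)ᶜ)ᶜ,
                (v' z.1 - v' z.2) * (φ z.1 - φ z.2) / ‖z.1 - z.2‖ ^ ((n : ℝ) + α)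
                ∂((padicHaarN p n).prod (padicHaarN p n)))
            = ∫ x in Bball p n N, h x * φ x ∂padicHaarN p n) →
        v' =ᵐ[padicHaarN p n] v) := by
  classical
  have hhsq : (∫⁻ x in Bball p n N, ENNReal.ofReal ((h x) ^ 2) ∂padicHaarN p n)
      = (eLpNorm h 2 (muOm p n N))^2 := by
    rw [← lint_sq]
    exact lintegral_congr fun x => ofReal_sq (h x)
  have hhL2' : MemLp h 2 (muOm p n N) := by
    refine ⟨hhmeas.aestronglyMeasurable, ?_⟩
    rw [hhsq] at hhL2
    by_contra hc
    rw [lt_top_iff_ne_top, not_not] at hc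
    rw [hc] at hhL2
    simp [ENNReal.top_pow] at hhL2
  -- the submodule of pairs represented by an actual function
  let M0 : Submodule ℝ (EH p n α N) :=
    { carrier := {e | ∃ w : (Fin n → ℚ_[p]) → ℝ, Measurable w ∧
        (⇑(e.fst) : (Fin n → ℚ_[p]) → ℝ) =ᵐ[muOm p n N] w ∧
        (⇑(e.snd)) =ᵐ[nuM p n α N] Dfn p n w}
      add_mem' := by
        rintro a b ⟨wa, hwa, ha1, ha2⟩ ⟨wb, hwb, hb1, hb2⟩
        refine ⟨wa + wb, hwa.add hwb, ?_, ?_⟩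
        · filter_upwards [Lp.coeFn_add a.fst b.fst, ha1, hb1] with x e1 e2 e3
          show (⇑(a.fst + b.fst)) x = wa x + wb x
          rw [e1]
          simp [e2, e3]
        · filter_upwards [Lp.coeFn_add a.snd b.snd, ha2, hb2] with z e1 e2 e3
          show (⇑(a.snd + b.snd)) z = Dfn p n (wa + wb) z
          rw [e1]
          simp only [Pi.add_apply, e2, e3, Dfn]
          ring
      zero_mem' := by
        refine ⟨0, measurable_const, ?_, ?_⟩
        · filter_upwards [Lp.coeFn_zero ℝ 2 (muOm p n N)] with x e1
          exact e1
        · filter_upwards [Lp.coeFn_zero ℝ 2 (nuM p n α N)] with z e1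
          simpa [Dfn] using e1
      smul_mem' := by
        rintro c a ⟨wa, hwa, ha1, ha2⟩
        refine ⟨c • wa, hwa.const_smul c, ?_, ?_⟩
        · filter_upwards [Lp.coeFn_smul c a.fst, ha1] with x e1 e2
          show (⇑(c • a.fst)) x = c • wa x
          rw [e1]
          simp [e2]
        · filter_upwards [Lp.coeFn_smul c a.snd, ha2] with z e1 e2
          show (⇑(c • a.snd)) z = Dfn p n (c • wa) z
          rw [e1]
          simp only [Pi.smul_apply, e2, Dfn, smul_eq_mul]
          ring }
  let M := M0.topologicalClosure
  haveI : CompleteSpace M := M0.isClosed_topologicalClosure.completeSpace_coe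
  let h0 : EH p n α N := (WithLp.equiv 2 _).symm (hhL2'.toLp h, 0)
  let ℓ : M →L[ℝ] ℝ := (innerSL ℝ h0).comp (Submodule.subtypeL M)
  set m0 : M := (InnerProductSpace.toDual ℝ M).symm ℓ with hm0_def
  have hm0E : ∀ m : M, (inner ℝ ((m0 : EH p n α N)) ((m : EH p n α N)) : ℝ)
      = inner ℝ h0 (m : EH p n α N) := by
    intro m
    rw [← Submodule.coe_inner, hm0_def, InnerProductSpace.toDual_symm_apply]
    rfl
  -- extract a representing function for m0
  have hm0mem : (m0 : EH p n α N) ∈ closure (M0 : Set (EH p n α N)) := by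
    rw [← Submodule.topologicalClosure_coe]
    exact m0.2
  obtain ⟨seq, hseq_mem, hseq_tendsto⟩ := mem_closure_iff_seq_limit.mp hm0mem
  choose wf hwf hw1 hw2 using hseq_mem
  have hcont1 : Continuous (fun e : EH p n α N => (WithLp.equiv 2 _ e).1) :=
    continuous_fst.comp (WithLp.prod_continuous_ofLp _ _ _)
  have hcont2 : Continuous (fun e : EH p n α N => (WithLp.equiv 2 _ e).2) :=
    continuous_snd.comp (WithLp.prod_continuous_ofLp _ _ _)
  have hfst : Tendsto (fun k => (seq k).fst) atTop (nhds ((m0 : EH p n α N).fst)) :=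
    (hcont1.tendsto _).comp hseq_tendsto
  have hsnd : Tendsto (fun k => (seq k).snd) atTop (nhds ((m0 : EH p n α N).snd)) :=
    (hcont2.tendsto _).comp hseq_tendsto
  have hels1 : Tendsto (fun k => eLpNorm (wf k - ⇑((m0 : EH p n α N).fst)) 2 (muOm p n N))
      atTop (nhds 0) := by
    have ht := (Lp.tendsto_Lp_iff_tendsto_eLpNorm' _ _).mp hfst
    refine ht.congr fun k => ?_
    apply eLpNorm_congr_ae
    filter_upwards [hw1 k] with x e1
    simp [Pi.sub_apply, e1]
  have hels2 : Tendsto (fun k => eLpNorm (Dfn p n (wf k) - ⇑((m0 : EH p n α N).snd)) 2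
      (nuM p n α N)) atTop (nhds 0) := by
    have ht := (Lp.tendsto_Lp_iff_tendsto_eLpNorm' _ _).mp hsnd
    refine ht.congr fun k => ?_
    apply eLpNorm_congr_ae
    filter_upwards [hw2 k] with z e1
    simp [Pi.sub_apply, e1]
  obtain ⟨V, hVmeas, hV1, hV2⟩ := limit_exists p n α N hα wf hwf _
    (Lp.aestronglyMeasurable _) _ (Lp.aestronglyMeasurable _) hels1 hels2
  have hVL1 : MemLp V 2 (muOm p n N) := MemLp.ae_eq hV1.symm (Lp.memLp _)
  have hVL2 : MemLp (Dfn p n V) 2 (nuM p n α N) := MemLp.ae_eq hV2.symm (Lp.memLp _)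
  have hSV : SE p n α N hVL1 hVL2 = (m0 : EH p n α N) := by
    have e1 : (SE p n α N hVL1 hVL2).fst = (m0 : EH p n α N).fst :=
      Lp.ext ((MemLp.coeFn_toLp hVL1).trans hV1)
    have e2 : (SE p n α N hVL1 hVL2).snd = (m0 : EH p n α N).snd :=
      Lp.ext ((MemLp.coeFn_toLp hVL2).trans hV2)
    exact (WithLp.equiv 2 _).injective (Prod.ext e1 e2)
  have hMemHV : MemH p n α N (fun _ => 0) V := (memH_iff p n α N hα).mpr ⟨hVmeas, hVL1, hVL2⟩
  -- the weak formulation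
  have hEq : ∀ φ : (Fin n → ℚ_[p]) → ℝ, MemH p n α N (fun _ => 0) φ →
      (∫ x in Bball p n N, V x * φ x ∂padicHaarN p n)
        + (∫ z in ((Bball p n N)ᶜ ×ˢ (Bball p n N)ᶜ)ᶜ,
            (V z.1 - V z.2) * (φ z.1 - φ z.2) / ‖z.1 - z.2‖ ^ ((n : ℝ) + α)
            ∂((padicHaarN p n).prod (padicHaarN p n)))
        = ∫ x in Bball p n N, h x * φ x ∂padicHaarN p n := by
    intro φ hφ
    obtain ⟨hφm, hφ1, hφ2⟩ := (memH_iff p n α N hα).mp hφ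
    have hmem0 : SE p n α N hφ1 hφ2 ∈ M0 :=
      ⟨φ, hφm, MemLp.coeFn_toLp hφ1, MemLp.coeFn_toLp hφ2⟩
    have hmem : SE p n α N hφ1 hφ2 ∈ M := M0.le_topologicalClosure hmem0
    rw [bilin_eq p n α N hα hVL1 hVL2 hφ1 hφ2, hSV]
    have hkey := hm0E ⟨SE p n α N hφ1 hφ2, hmem⟩
    rw [hkey]
    show (inner ℝ h0 (SE p n α N hφ1 hφ2) : ℝ) = _
    rw [WithLp.prod_inner_apply, WithLp.ofLp_fst, WithLp.ofLp_snd, WithLp.ofLp_fst, WithLp.ofLp_snd]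
    have hfst0 : (h0.fst : Lp ℝ 2 (muOm p n N)) = hhL2'.toLp h := rfl
    have hsnd0 : (h0.snd : Lp ℝ 2 (nuM p n α N)) = 0 := rfl
    rw [hfst0, hsnd0, SE_fst, SE_snd, inner_zero_left, add_zero]
    exact inner_L2_eq _ h φ hhL2' hφ1
  refine ⟨V, hMemHV, hEq, ?_, ?_⟩
  · -- norm bound
    rw [normSqH_eq p n α N hα hVmeas, hhsq]
    have e1 : eLpNorm V 2 (muOm p n N) = ENNReal.ofReal ‖(m0 : EH p n α N).fst‖ := by
      rw [eLpNorm_congr_ae hV1, Lp.norm_def,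
        ENNReal.ofReal_toReal (Lp.eLpNorm_ne_top ((m0 : EH p n α N).fst))]
    have e2 : eLpNorm (Dfn p n V) 2 (nuM p n α N)
        = ENNReal.ofReal ‖(m0 : EH p n α N).snd‖ := by
      rw [eLpNorm_congr_ae hV2, Lp.norm_def,
        ENNReal.ofReal_toReal (Lp.eLpNorm_ne_top ((m0 : EH p n α N).snd))]
    have e3 : eLpNorm h 2 (muOm p n N) = ENNReal.ofReal ‖hhL2'.toLp h‖ := by
      rw [eLpNorm_congr_ae (MemLp.coeFn_toLp hhL2').symm, Lp.norm_def,
        ENNReal.ofReal_toReal (Lp.eLpNorm_ne_top _)]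
    rw [e1, e2, e3, ← ENNReal.ofReal_pow (norm_nonneg _), ← ENNReal.ofReal_pow (norm_nonneg _),
      ← ENNReal.ofReal_pow (norm_nonneg _), ← ENNReal.ofReal_add (by positivity) (by positivity)]
    apply ENNReal.ofReal_le_ofReal
    -- real inequality
    have hsq : ‖(m0 : EH p n α N).fst‖^2 + ‖(m0 : EH p n α N).snd‖^2
        = ‖(m0 : EH p n α N)‖^2 := (WithLp.prod_norm_sq_eq_of_L2 _).symm
    rw [hsq]
    have hinner : ‖(m0 : EH p n α N)‖^2 = inner ℝ h0 ((m0 : EH p n α N)) := by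
      rw [← hm0E m0, real_inner_self_eq_norm_sq]
    have hcs : (inner ℝ h0 ((m0 : EH p n α N)) : ℝ) ≤ ‖h0‖ * ‖(m0 : EH p n α N)‖ :=
      real_inner_le_norm _ _
    have hh0 : ‖h0‖ = ‖hhL2'.toLp h‖ := WithLp.norm_toLp_fst _ _ _ _
    nlinarith [norm_nonneg (m0 : EH p n α N), norm_nonneg (hhL2'.toLp h),
      sq_nonneg (‖hhL2'.toLp h‖ - ‖(m0 : EH p n α N)‖), hinner ▸ (hh0 ▸ hcs)]
  · -- uniqueness
    intro v' hv' hv'eq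
    obtain ⟨hv'm, hv'1, hv'2⟩ := (memH_iff p n α N hα).mp hv'
    set φ := v' - V with hφ_def
    have hφm : Measurable φ := hv'm.sub hVmeas
    have hφ1 : MemLp φ 2 (muOm p n N) := hv'1.sub hVL1
    have hDφ : Dfn p n φ = Dfn p n v' - Dfn p n V := by
      funext z
      simp only [Dfn, hφ_def, Pi.sub_apply]
      ring
    have hφ2 : MemLp (Dfn p n φ) 2 (nuM p n α N) := by
      rw [hDφ]
      exact hv'2.sub hVL2
    have hφH : MemH p n α N (fun _ => 0) φ := (memH_iff p n α N hα).mpr ⟨hφm, hφ1, hφ2⟩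
    have e1 := hv'eq φ hφH
    have e2 := hEq φ hφH
    rw [bilin_eq p n α N hα hv'1 hv'2 hφ1 hφ2] at e1
    rw [bilin_eq p n α N hα hVL1 hVL2 hφ1 hφ2] at e2
    have e3 : (inner ℝ (SE p n α N hv'1 hv'2 - SE p n α N hVL1 hVL2) (SE p n α N hφ1 hφ2) : ℝ)
        = 0 := by
      rw [inner_sub_left, e1, e2]
      ring
    have hSsub : SE p n α N hv'1 hv'2 - SE p n α N hVL1 hVL2 = SE p n α N hφ1 hφ2 := by
      have efst : (SE p n α N hv'1 hv'2 - SE p n α N hVL1 hVL2).fst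
          = (SE p n α N hφ1 hφ2).fst := by
        rw [WithLp.sub_fst, SE_fst, SE_fst, SE_fst, ← MemLp.toLp_sub hv'1 hVL1]
      have esnd : (SE p n α N hv'1 hv'2 - SE p n α N hVL1 hVL2).snd
          = (SE p n α N hφ1 hφ2).snd := by
        rw [WithLp.sub_snd, SE_snd, SE_snd, SE_snd, ← MemLp.toLp_sub hv'2 hVL2]
        apply Lp.ext
        filter_upwards [MemLp.coeFn_toLp (hv'2.sub hVL2), MemLp.coeFn_toLp hφ2] with z g1 g2
        rw [g1, g2, hDφ]
      exact (WithLp.equiv 2 _).injective (Prod.ext efst esnd)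
    rw [hSsub] at e3
    have hzero : SE p n α N hφ1 hφ2 = 0 := by rwa [inner_self_eq_zero] at e3
    have z1 : hφ1.toLp φ = 0 := congrArg WithLp.fst hzero
    have z2 : hφ2.toLp (Dfn p n φ) = 0 := congrArg WithLp.snd hzero
    have hφ0 : φ =ᵐ[muOm p n N] 0 := by
      have hc := MemLp.coeFn_toLp hφ1
      rw [z1] at hc
      exact hc.symm.trans (Lp.coeFn_zero ℝ 2 (muOm p n N))
    have hφD0 : Dfn p n φ =ᵐ[nuM p n α N] 0 := by
      have hc := MemLp.coeFn_toLp hφ2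
      rw [z2] at hc
      exact hc.symm.trans (Lp.coeFn_zero ℝ 2 (nuM p n α N))
    have hfin := eq_ae_zero p n α N hα hφ0 hφD0
    filter_upwards [hfin] with x hx
    have hx' : v' x - V x = 0 := hx
    linarith
end
end

section
/- Let p be a prime, n ≥ 1, α > 0, N ∈ ℤ, Ω = B_N ⊆ ℚ_p^n, and let T : L²(Ω) → L²(Ω) be the map defined by T h = v|_Ω, where v ∈ H^α_0(Ω) is the (a.e.-unique) function satisfying ∫_Ω v φ dx + ∬_{(K^n×K^n)∖(Ω^c×Ω^c)} (v(x)−v(y))(φ(x)−φ(y))/‖x−y‖^{n+α} dx dy = ∫_Ω h φ dx for every φ ∈ H^α_0(Ω). Then Ker(I − T) consists exactly of the a.e.-constant functions: w ∈ L²(Ω) satisfies T w = w if and only if there is c ∈ ℝ with w = c almost everywhere on Ω. -/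
noncomputable section

open MeasureTheory Metric ENNReal

/-- `v ∈ H^α_0(Ω)` solves the weak problem with homogeneous Neumann condition and
datum `h`: `∫_Ω v φ + ∬ (v(x)−v(y))(φ(x)−φ(y))/‖x−y‖^{n+α} = ∫_Ω h φ` for all
`φ ∈ H^α_0(Ω)`. -/
def SolvesAux (p : ℕ) [Fact p.Prime] (n : ℕ) (α : ℝ) (N : ℤ)
    (h v : (Fin n → ℚ_[p]) → ℝ) : Prop :=
  MemH p n α N (fun _ => 0) v ∧
  ∀ φ : (Fin n → ℚ_[p]) → ℝ, MemH p n α N (fun _ => 0) φ →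
    (∫ x in Bball p n N, v x * φ x ∂padicHaarN p n)
      + (∫ z in ((Bball p n N)ᶜ ×ˢ (Bball p n N)ᶜ)ᶜ,
          (v z.1 - v z.2) * (φ z.1 - φ z.2) / ‖z.1 - z.2‖ ^ ((n : ℝ) + α)
          ∂((padicHaarN p n).prod (padicHaarN p n)))
      = ∫ x in Bball p n N, h x * φ x ∂padicHaarN p n

/-! ### Auxiliary lemmas -/

namespace PadicKernelAux

variable {p : ℕ} [Fact p.Prime] {n : ℕ}

instance : SigmaFinite (padicHaar p) := by unfold padicHaar; infer_instance
instance : IsFiniteMeasureOnCompacts (padicHaar p) := by unfold padicHaar; infer_instance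
instance : (padicHaar p).IsOpenPosMeasure := by unfold padicHaar; infer_instance
instance : SigmaFinite (padicHaarN p n) := by unfold padicHaarN; infer_instance

lemma ppow_pos (p : ℕ) [Fact p.Prime] (N : ℤ) : (0:ℝ) < (p:ℝ) ^ N := by
  have : (0:ℝ) < (p:ℝ) := by exact_mod_cast (Fact.out : p.Prime).pos
  positivity

lemma Bball_eq (N : ℤ) :
    Bball p n N = Set.pi Set.univ (fun _ : Fin n => closedBall (0:ℚ_[p]) ((p:ℝ)^N)) := by
  ext x
  simp only [Bball, Set.mem_setOf_eq, Set.mem_pi, Set.mem_univ, forall_true_left,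
    mem_closedBall, dist_zero_right]
  exact pi_norm_le_iff_of_nonneg (ppow_pos p N).le

lemma Bball_lt_top (N : ℤ) : padicHaarN p n (Bball p n N) < ⊤ := by
  rw [Bball_eq, padicHaarN, Measure.pi_pi]
  exact ENNReal.prod_lt_top
    (fun i _ => ((isCompact_closedBall (0:ℚ_[p]) ((p:ℝ)^N)).measure_lt_top (μ := padicHaar p)))

lemma Bball_pos (N : ℤ) : 0 < padicHaarN p n (Bball p n N) := by
  rw [Bball_eq, padicHaarN, Measure.pi_pi, CanonicallyOrderedAdd.prod_pos]
  intro i _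
  exact (IsUltrametricDist.isOpen_closedBall 0 (ppow_pos p N).ne').measure_pos _
    ⟨0, mem_closedBall_self (ppow_pos p N).le⟩

/-- L² membership from finiteness of the first term of the `H`-norm. -/
lemma memL2 {u : (Fin n → ℚ_[p]) → ℝ} {ν : Measure (Fin n → ℚ_[p])}
    (hm : Measurable u) (h1 : ∫⁻ x, ENNReal.ofReal (u x ^ 2) ∂ν < ⊤) :
    MemLp u 2 ν := by
  rw [memLp_two_iff_integrable_sq hm.aestronglyMeasurable]
  refine ⟨(hm.pow_const 2).aestronglyMeasurable, ?_⟩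
  rw [hasFiniteIntegral_iff_ofReal (Filter.Eventually.of_forall fun x => sq_nonneg (u x))]
  exact h1

lemma integrable_mul_L2 {E : Type*} [MeasurableSpace E] {ν : Measure E} {u w : E → ℝ}
    (hu : MemLp u 2 ν) (hw : MemLp w 2 ν) : Integrable (fun x => u x * w x) ν := by
  have h : (1:ℝ≥0∞)/1 = 1/2 + 1/2 := by
    rw [ENNReal.div_add_div_same, one_add_one_eq_two, ENNReal.div_self two_ne_zero ofNat_ne_top,
      one_div_one]
  have h2 := (hw.smul hu (hpqr := ⟨by simpa only [one_div] using h.symm⟩) : MemLp (u • w) 1 ν)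
  rw [← memLp_one_iff_integrable]
  exact h2

/-- From a.e. equality of pairs on `Ω × Ω`, extract an a.e. constant. -/
lemma eq_const_of_pairs {ν : Measure (Fin n → ℚ_[p])} [SigmaFinite ν]
    {Ω : Set (Fin n → ℚ_[p])} {v : (Fin n → ℚ_[p]) → ℝ}
    (hΩ : ν Ω ≠ 0)
    (hpair : ∀ᵐ z ∂((ν.prod ν).restrict (Ω ×ˢ Ω)), v z.1 = v z.2) :
    ∃ c : ℝ, v =ᵐ[ν.restrict Ω] fun _ => c := by
  rw [← Measure.prod_restrict] at hpair
  have h2 := Measure.ae_ae_of_ae_prod hpair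
  have hne : ν.restrict Ω ≠ 0 := by
    rw [← Measure.measure_univ_eq_zero.ne, Measure.restrict_apply_univ]
    exact hΩ
  haveI : (ae (ν.restrict Ω)).NeBot := ae_neBot.2 hne
  obtain ⟨x₀, hx₀⟩ := h2.exists
  exact ⟨v x₀, hx₀.mono fun y hy => hy.symm⟩

end PadicKernelAux

open PadicKernelAux

/-- The kernel of `I − T`, where `T` is the solution operator of the
homogeneous weak Neumann problem, consists exactly of the a.e.-constant functions. -/
theorem padic_solution_operator_kernel (p : ℕ) [Fact p.Prime]
    (n : ℕ) (hn : 1 ≤ n) (α : ℝ) (hα : 0 < α) (N : ℤ)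
    (T : Lp ℝ 2 ((padicHaarN p n).restrict (Bball p n N)) →
         Lp ℝ 2 ((padicHaarN p n).restrict (Bball p n N)))
    (hT : ∀ h : Lp ℝ 2 ((padicHaarN p n).restrict (Bball p n N)),
      ∃ v : (Fin n → ℚ_[p]) → ℝ, SolvesAux p n α N (h : (Fin n → ℚ_[p]) → ℝ) v ∧
        (T h : (Fin n → ℚ_[p]) → ℝ) =ᵐ[(padicHaarN p n).restrict (Bball p n N)] v) :
    ∀ w : Lp ℝ 2 ((padicHaarN p n).restrict (Bball p n N)),
      T w = w ↔ ∃ c : ℝ,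
        (w : (Fin n → ℚ_[p]) → ℝ)
          =ᵐ[(padicHaarN p n).restrict (Bball p n N)] fun _ => c := by
  -- basic facts
  have hΩfin : padicHaarN p n (Bball p n N) < ⊤ := Bball_lt_top N
  have hΩpos : padicHaarN p n (Bball p n N) ≠ 0 := (Bball_pos N).ne'
  haveI : IsFiniteMeasure ((padicHaarN p n).restrict (Bball p n N)) :=
    ⟨by rw [Measure.restrict_apply_univ]; exact hΩfin⟩
  have hΩΩS : (Bball p n N) ×ˢ (Bball p n N) ⊆ ((Bball p n N)ᶜ ×ˢ (Bball p n N)ᶜ)ᶜ := by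
    rintro ⟨x, y⟩ ⟨hx, -⟩ ⟨hx', -⟩
    exact hx' hx
  -- the energy integrand
  set F : ((Fin n → ℚ_[p]) → ℝ) → ((Fin n → ℚ_[p]) × (Fin n → ℚ_[p])) → ℝ :=
    fun v z => (v z.1 - v z.2) ^ 2 / ‖z.1 - z.2‖ ^ ((n : ℝ) + α) with hF
  have hpw_nonneg : (0:ℝ) ≤ (n : ℝ) + α := add_nonneg (Nat.cast_nonneg n) hα.le
  have hFnonneg : ∀ (v : (Fin n → ℚ_[p]) → ℝ) z, 0 ≤ F v z := fun v z =>
    div_nonneg (sq_nonneg _) (Real.rpow_nonneg (norm_nonneg _) _)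
  have hFmeas : ∀ (v : (Fin n → ℚ_[p]) → ℝ), Measurable v → Measurable (F v) := by
    intro v hv
    exact (((hv.comp measurable_fst).sub (hv.comp measurable_snd)).pow_const 2).div
      ((Real.continuous_rpow_const hpw_nonneg).measurable.comp
        ((measurable_fst.sub measurable_snd).norm))
  -- integrability of the energy integrand for v ∈ MemH
  have hFint : ∀ (v : (Fin n → ℚ_[p]) → ℝ), MemH p n α N (fun _ => 0) v →
      Integrable (F v) (((padicHaarN p n).prod (padicHaarN p n)).restrict (((Bball p n N)ᶜ ×ˢ (Bball p n N)ᶜ)ᶜ)) := by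
    intro v hv
    refine ⟨(hFmeas v hv.1).aestronglyMeasurable, ?_⟩
    rw [hasFiniteIntegral_iff_ofReal (Filter.Eventually.of_forall fun z => hFnonneg v z)]
    have := hv.2
    rw [normSqH] at this
    exact lt_of_le_of_lt le_add_self this
  -- L² membership of v ∈ MemH on Ω
  have hL2 : ∀ (v : (Fin n → ℚ_[p]) → ℝ), MemH p n α N (fun _ => 0) v →
      MemLp v 2 ((padicHaarN p n).restrict (Bball p n N)) := by
    intro v hv
    refine memL2 hv.1 ?_
    have := hv.2
    rw [normSqH] at this
    exact lt_of_le_of_lt (le_add_right (le_add_right le_rfl)) this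
  -- zero energy gives a.e. constant on Ω
  have hconst : ∀ (v : (Fin n → ℚ_[p]) → ℝ), MemH p n α N (fun _ => 0) v →
      (∫ z in ((Bball p n N)ᶜ ×ˢ (Bball p n N)ᶜ)ᶜ, (v z.1 - v z.2) * (v z.1 - v z.2) / ‖z.1 - z.2‖ ^ ((n : ℝ) + α) ∂((padicHaarN p n).prod (padicHaarN p n))) = 0 →
      ∃ c : ℝ, v =ᵐ[(padicHaarN p n).restrict (Bball p n N)] fun _ => c := by
    intro v hv hzero
    have hzero' : (∫ z in ((Bball p n N)ᶜ ×ˢ (Bball p n N)ᶜ)ᶜ, F v z ∂((padicHaarN p n).prod (padicHaarN p n))) = 0 := by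
      rw [← hzero]
      exact integral_congr_ae (Filter.Eventually.of_forall fun z => by rw [hF]; ring_nf)
    have hae : F v =ᵐ[((padicHaarN p n).prod (padicHaarN p n)).restrict (((Bball p n N)ᶜ ×ˢ (Bball p n N)ᶜ)ᶜ)] 0 :=
      (integral_eq_zero_iff_of_nonneg_ae
        (Filter.Eventually.of_forall fun z => hFnonneg v z) (hFint v hv)).1 hzero'
    have hpairS : ∀ᵐ z ∂(((padicHaarN p n).prod (padicHaarN p n)).restrict (((Bball p n N)ᶜ ×ˢ (Bball p n N)ᶜ)ᶜ)), v z.1 = v z.2 := by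
      refine hae.mono fun z hz => ?_
      by_cases hzz : z.1 = z.2
      · rw [hzz]
      · have hnorm : (0:ℝ) < ‖z.1 - z.2‖ := by
          rw [norm_pos_iff]
          exact sub_ne_zero_of_ne hzz
        have hden : (0:ℝ) < ‖z.1 - z.2‖ ^ ((n : ℝ) + α) := Real.rpow_pos_of_pos hnorm _
        have hz' : (v z.1 - v z.2) ^ 2 / ‖z.1 - z.2‖ ^ ((n : ℝ) + α) = 0 := hz
        rcases div_eq_zero_iff.1 hz' with hnum | hden0
        · exact sub_eq_zero.1 (sq_eq_zero_iff.1 hnum)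
        · exact absurd hden0 hden.ne'
    have hpair : ∀ᵐ z ∂(((padicHaarN p n).prod (padicHaarN p n)).restrict ((Bball p n N) ×ˢ (Bball p n N))), v z.1 = v z.2 :=
      ae_restrict_of_ae_restrict_of_subset hΩΩS hpairS
    exact eq_const_of_pairs hΩpos hpair
  intro w
  constructor
  · -- forward: T w = w ⇒ w a.e. constant
    intro hTw
    obtain ⟨v, hsol, hv⟩ := hT w
    rw [hTw] at hv
    -- hv : ⇑w =ᵐ[(padicHaarN p n).restrict (Bball p n N)] v
    have heq := hsol.2 v hsol.1
    have hrhs : (∫ x in Bball p n N, (w : (Fin n → ℚ_[p]) → ℝ) x * v x ∂padicHaarN p n)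
        = ∫ x in Bball p n N, v x * v x ∂padicHaarN p n :=
      integral_congr_ae (hv.mono fun x hx => by simp only [hx])
    rw [hrhs] at heq
    have hzero : (∫ z in ((Bball p n N)ᶜ ×ˢ (Bball p n N)ᶜ)ᶜ, (v z.1 - v z.2) * (v z.1 - v z.2) / ‖z.1 - z.2‖ ^ ((n : ℝ) + α) ∂((padicHaarN p n).prod (padicHaarN p n))) = 0 := by
      linarith [heq]
    obtain ⟨c, hc⟩ := hconst v hsol.1 hzero
    exact ⟨c, hv.trans hc⟩
  · -- converse: w a.e. constant ⇒ T w = w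
    rintro ⟨c, hwc⟩
    obtain ⟨v, hsol, hv⟩ := hT w
    -- d := v - c
    set d : (Fin n → ℚ_[p]) → ℝ := fun x => v x - c with hd
    have hd_meas : Measurable d := hsol.1.1.sub measurable_const
    have hd_sub : ∀ x y, d x - d y = v x - v y := fun x y => by rw [hd]; ring
    -- MemH d
    have hd_mem : MemH p n α N (fun _ => 0) d := by
      refine ⟨hd_meas, ?_⟩
      rw [normSqH]
      have hv2 := hsol.1.2
      rw [normSqH] at hv2
      have h1v : (∫⁻ x in Bball p n N, ENNReal.ofReal (v x ^ 2) ∂padicHaarN p n) < ⊤ :=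
        lt_of_le_of_lt (le_add_right (le_add_right le_rfl)) hv2
      have h3v : (∫⁻ z in ((Bball p n N)ᶜ ×ˢ (Bball p n N)ᶜ)ᶜ, ENNReal.ofReal ((v z.1 - v z.2) ^ 2 / ‖z.1 - z.2‖ ^ ((n : ℝ) + α)) ∂((padicHaarN p n).prod (padicHaarN p n))) < ⊤ :=
        lt_of_le_of_lt le_add_self hv2
      have h2d : (∫⁻ x in (Bball p n N)ᶜ, ENNReal.ofReal (|(fun _ => (0:ℝ)) x| * d x ^ 2) ∂padicHaarN p n) = 0 := by
        simp
      have h3d : (∫⁻ z in ((Bball p n N)ᶜ ×ˢ (Bball p n N)ᶜ)ᶜ, ENNReal.ofReal ((d z.1 - d z.2) ^ 2 / ‖z.1 - z.2‖ ^ ((n : ℝ) + α)) ∂((padicHaarN p n).prod (padicHaarN p n)))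
          = ∫⁻ z in ((Bball p n N)ᶜ ×ˢ (Bball p n N)ᶜ)ᶜ, ENNReal.ofReal ((v z.1 - v z.2) ^ 2 / ‖z.1 - z.2‖ ^ ((n : ℝ) + α)) ∂((padicHaarN p n).prod (padicHaarN p n)) :=
        lintegral_congr fun z => by rw [hd_sub]
      have h1d : (∫⁻ x in Bball p n N, ENNReal.ofReal (d x ^ 2) ∂padicHaarN p n) < ⊤ := by
        have hpt : ∀ x, ENNReal.ofReal (d x ^ 2)
            ≤ ENNReal.ofReal (2 * v x ^ 2) + ENNReal.ofReal (2 * c ^ 2) := by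
          intro x
          refine le_trans (ENNReal.ofReal_le_ofReal ?_) (ENNReal.ofReal_add_le)
          simp only [hd]; nlinarith [sq_nonneg (v x + c)]
        calc (∫⁻ x in Bball p n N, ENNReal.ofReal (d x ^ 2) ∂padicHaarN p n)
            ≤ ∫⁻ x in Bball p n N, (ENNReal.ofReal (2 * v x ^ 2) + ENNReal.ofReal (2 * c ^ 2)) ∂padicHaarN p n :=
              lintegral_mono hpt
          _ = (∫⁻ x in Bball p n N, ENNReal.ofReal (2 * v x ^ 2) ∂padicHaarN p n)
              + ENNReal.ofReal (2 * c ^ 2) * ((padicHaarN p n).restrict (Bball p n N)) Set.univ := by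
              rw [lintegral_add_right _ measurable_const, lintegral_const]
          _ < ⊤ := by
              refine ENNReal.add_lt_top.2 ⟨?_, ?_⟩
              · have : (∫⁻ x in Bball p n N, ENNReal.ofReal (2 * v x ^ 2) ∂padicHaarN p n)
                    = 2 * ∫⁻ x in Bball p n N, ENNReal.ofReal (v x ^ 2) ∂padicHaarN p n := by
                  rw [← lintegral_const_mul 2 ((hsol.1.1.pow_const 2).ennreal_ofReal)]
                  refine lintegral_congr fun x => ?_
                  rw [ENNReal.ofReal_mul (by norm_num : (0:ℝ) ≤ 2)]
                  norm_num
                rw [this]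
                exact ENNReal.mul_lt_top ofNat_lt_top h1v
              · rw [Measure.restrict_apply_univ]
                exact ENNReal.mul_lt_top ofReal_lt_top hΩfin
      rw [h2d, h3d]
      simp only [add_zero]
      exact ENNReal.add_lt_top.2 ⟨h1d, h3v⟩
    -- test the equation with φ = d
    have heq := hsol.2 d hd_mem
    -- rewrite the three integrals
    have hvL2 := hL2 v hsol.1
    have hdL2 := hL2 d hd_mem
    have hwL2 : MemLp (w : (Fin n → ℚ_[p]) → ℝ) 2 ((padicHaarN p n).restrict (Bball p n N)) := Lp.memLp w
    have hcL2 : MemLp (fun _ : Fin n → ℚ_[p] => c) 2 ((padicHaarN p n).restrict (Bball p n N)) := memLp_const c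
    have hdd_int : Integrable (fun x => d x * d x) ((padicHaarN p n).restrict (Bball p n N)) := integrable_mul_L2 hdL2 hdL2
    have hcd_int : Integrable (fun x => c * d x) ((padicHaarN p n).restrict (Bball p n N)) := integrable_mul_L2 hcL2 hdL2
    have hlhs1 : (∫ x in Bball p n N, v x * d x ∂padicHaarN p n)
        = (∫ x in Bball p n N, d x * d x ∂padicHaarN p n) + ∫ x in Bball p n N, c * d x ∂padicHaarN p n := by
      rw [← integral_add hdd_int hcd_int]
      refine integral_congr_ae (Filter.Eventually.of_forall fun x => ?_)
      rw [hd]; ring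
    have hrhs : (∫ x in Bball p n N, (w : (Fin n → ℚ_[p]) → ℝ) x * d x ∂padicHaarN p n) = ∫ x in Bball p n N, c * d x ∂padicHaarN p n :=
      integral_congr_ae (hwc.mono fun x hx => by simp only [hx])
    have hB : (∫ z in ((Bball p n N)ᶜ ×ˢ (Bball p n N)ᶜ)ᶜ, (v z.1 - v z.2) * (d z.1 - d z.2) / ‖z.1 - z.2‖ ^ ((n : ℝ) + α) ∂((padicHaarN p n).prod (padicHaarN p n)))
        = ∫ z in ((Bball p n N)ᶜ ×ˢ (Bball p n N)ᶜ)ᶜ, F d z ∂((padicHaarN p n).prod (padicHaarN p n)) := by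
      refine integral_congr_ae (Filter.Eventually.of_forall fun z => ?_)
      simp only [hF, hd_sub]
      ring
    rw [hlhs1, hrhs, hB] at heq
    have hkey : (∫ x in Bball p n N, d x * d x ∂padicHaarN p n) + (∫ z in ((Bball p n N)ᶜ ×ˢ (Bball p n N)ᶜ)ᶜ, F d z ∂((padicHaarN p n).prod (padicHaarN p n))) = 0 := by linarith
    have hdd_nonneg : (0:ℝ) ≤ ∫ x in Bball p n N, d x * d x ∂padicHaarN p n :=
      integral_nonneg fun x => mul_self_nonneg _
    have hE_nonneg : (0:ℝ) ≤ ∫ z in ((Bball p n N)ᶜ ×ˢ (Bball p n N)ᶜ)ᶜ, F d z ∂((padicHaarN p n).prod (padicHaarN p n)) :=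
      integral_nonneg fun z => hFnonneg d z
    have hdd_zero : (∫ x in Bball p n N, d x * d x ∂padicHaarN p n) = 0 := by linarith
    have hd_zero : (fun x => d x * d x) =ᵐ[(padicHaarN p n).restrict (Bball p n N)] 0 :=
      (integral_eq_zero_iff_of_nonneg_ae
        (Filter.Eventually.of_forall fun x => mul_self_nonneg (d x)) hdd_int).1 hdd_zero
    have hvc : v =ᵐ[(padicHaarN p n).restrict (Bball p n N)] fun _ => c := by
      refine hd_zero.mono fun x hx => ?_
      have : d x * d x = 0 := hx
      have : d x = 0 := by nlinarith [this]
      have : v x - c = 0 := this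
      linarith
    -- conclude T w = w
    apply Lp.ext (μ := (padicHaarN p n).restrict (Bball p n N))
    calc (T w : (Fin n → ℚ_[p]) → ℝ) =ᵐ[(padicHaarN p n).restrict (Bball p n N)] v := hv
      _ =ᵐ[(padicHaarN p n).restrict (Bball p n N)] fun _ => c := hvc
      _ =ᵐ[(padicHaarN p n).restrict (Bball p n N)] (w : (Fin n → ℚ_[p]) → ℝ) := hwc.symm
end
end

section
/- Let p be a prime, α > 0, N ∈ ℤ, and let u : ℚ_p → ℝ be bounded and measurable, and locally constant on B_N (i.e. there is ℓ ∈ ℤ such that u(x + x') = u(x) for all x ∈ B_N and |x'|_p ≤ p^{−ℓ}). Then for every x ∈ B_N all the integrals below converge absolutely and (D^{α,1}u)(x) = c_{1,α} ∫_{B_N} (u(x)−u(y))/|x−y|_p^{1+α} dy + λ_N u(x) − c_{1,α} ∫_{|y|_p > p^N} u(y)/|y|_p^{1+α} dy. -/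
noncomputable section

open MeasureTheory Metric ENNReal

/-- The ball `B_N = {x ∈ ℚ_p : |x|_p ≤ p^N}`. -/
def Bball1 (p : ℕ) [Fact p.Prime] (N : ℤ) : Set ℚ_[p] := {x | ‖x‖ ≤ (p : ℝ) ^ N}

/-- The constant `c_{1,α} = (p^α − 1)/(1 − p^{−α−1})`. -/
def c1a (p : ℕ) (α : ℝ) : ℝ := ((p : ℝ) ^ α - 1) / (1 - (p : ℝ) ^ (-α - 1))

/-- The constant `λ_N = (p−1) p^{−αN} / (p (1 − p^{−α−1}))`. -/
def lamN (p : ℕ) (α : ℝ) (N : ℤ) : ℝ :=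
  ((p : ℝ) - 1) * (p : ℝ) ^ (-α * (N : ℝ)) / ((p : ℝ) * (1 - (p : ℝ) ^ (-α - 1)))

/-- The one-dimensional Vladimirov–Taibleson operator
`(D^{α,1}u)(x) = c_{1,α} ∫ (u(x)−u(y))/|x−y|^{1+α} dy`. -/
def Dop1 (p : ℕ) [Fact p.Prime] (α : ℝ) (u : ℚ_[p] → ℝ) (x : ℚ_[p]) : ℝ :=
  c1a p α * ∫ y, (u x - u y) / ‖x - y‖ ^ (1 + α) ∂padicHaar p

/-- The nonlocal normal derivative
`(N_α u)(x) = c_{1,α} ∫_{B_N} (u(x)−u(y))/|x−y|^{1+α} dy`. -/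
def Nop1 (p : ℕ) [Fact p.Prime] (α : ℝ) (N : ℤ) (u : ℚ_[p] → ℝ) (x : ℚ_[p]) : ℝ :=
  c1a p α * ∫ y in Bball1 p N, (u x - u y) / ‖x - y‖ ^ (1 + α) ∂padicHaar p


instance (p : ℕ) [Fact p.Prime] : (padicHaar p).IsAddLeftInvariant :=
  Measure.isAddLeftInvariant_addHaarMeasure (padicUnitBall p)

section Aux
variable (p : ℕ) [Fact p.Prime]

lemma padic_translate (a : ℚ_[p]) (r : ℝ) :
    padicHaar p (closedBall a r) = padicHaar p (closedBall 0 r) := by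
  have h : closedBall a r = (fun x => (-a) + x) ⁻¹' closedBall 0 r := by
    ext x
    simp [mem_closedBall, dist_eq_norm, neg_add_eq_sub]
  rw [h]
  exact measure_preimage_add (padicHaar p) (-a) _


lemma hp1R : (1:ℝ) < (p:ℝ) := by exact_mod_cast (Fact.out : p.Prime).one_lt
lemma hp0R : (0:ℝ) < (p:ℝ) := lt_trans one_pos (hp1R p)

lemma padic_cover (m : ℤ) : closedBall (0:ℚ_[p]) ((p:ℝ)^m)
    = ⋃ c ∈ Finset.range p, closedBall ((c:ℚ_[p]) * (p:ℚ_[p])^(-m)) ((p:ℝ)^(m-1)) := by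
  have hp0 := hp0R p
  ext x
  simp only [Set.mem_iUnion, mem_closedBall, dist_eq_norm, sub_zero, Finset.mem_range]
  constructor
  · intro hx
    have hz : ‖x * (p:ℚ_[p])^m‖ ≤ 1 := by
      rw [norm_mul, Padic.norm_p_zpow]
      calc ‖x‖ * (p:ℝ)^(-m) ≤ (p:ℝ)^m * (p:ℝ)^(-m) := by
            apply mul_le_mul_of_nonneg_right hx (zpow_nonneg hp0.le _)
        _ = 1 := by rw [← zpow_add₀ (ne_of_gt hp0)]; simp
    set z : ℤ_[p] := ⟨x * (p:ℚ_[p])^m, hz⟩ with hzdef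
    refine ⟨z.appr 1, by simpa using z.appr_lt 1, ?_⟩
    have h2 : ‖z - ((z.appr 1 : ℕ) : ℤ_[p])‖ ≤ (p:ℝ)^(-1:ℤ) := by
      have := (PadicInt.norm_le_pow_iff_mem_span_pow (z - ((z.appr 1 : ℕ) : ℤ_[p])) 1).2
        (by simpa using z.appr_spec 1)
      norm_num at this ⊢
      exact this
    have h3 : ‖x * (p:ℚ_[p])^m - ((z.appr 1 : ℕ) : ℚ_[p])‖ ≤ (p:ℝ)^(-1:ℤ) := by
      have : ((z - ((z.appr 1 : ℕ) : ℤ_[p]) : ℤ_[p]) : ℚ_[p])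
          = x * (p:ℚ_[p])^m - ((z.appr 1 : ℕ) : ℚ_[p]) := by
        push_cast [hzdef]
        rfl
      rw [PadicInt.norm_def, this] at h2
      exact h2
    have hxeq : x - ((z.appr 1 : ℕ) : ℚ_[p]) * (p:ℚ_[p])^(-m)
        = (x * (p:ℚ_[p])^m - ((z.appr 1 : ℕ) : ℚ_[p])) * (p:ℚ_[p])^(-m) := by
      have hpne : (p:ℚ_[p]) ≠ 0 := by
        exact_mod_cast Nat.cast_ne_zero.2 (Fact.out : p.Prime).ne_zero
      have hpme : (p:ℚ_[p])^m ≠ 0 := zpow_ne_zero _ hpne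
      field_simp
      have hqP : (p:ℚ_[p])^(-m) * (p:ℚ_[p])^m = 1 := by rw [← zpow_add₀ hpne]; simp
      linear_combination (-x) * hqP
    rw [hxeq, norm_mul, Padic.norm_p_zpow, neg_neg]
    calc ‖x * (p:ℚ_[p])^m - ((z.appr 1 : ℕ) : ℚ_[p])‖ * (p:ℝ)^m
        ≤ (p:ℝ)^(-1:ℤ) * (p:ℝ)^m := by
          apply mul_le_mul_of_nonneg_right h3 (zpow_nonneg hp0.le _)
      _ = (p:ℝ)^(m-1) := by rw [← zpow_add₀ (ne_of_gt hp0)]; ring_nf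
  · rintro ⟨c, hc, hxc⟩
    have h1 : ‖((c:ℕ) : ℚ_[p]) * (p:ℚ_[p])^(-m)‖ ≤ (p:ℝ)^m := by
      rw [norm_mul, Padic.norm_p_zpow, neg_neg]
      have : ‖((c:ℕ) : ℚ_[p])‖ ≤ 1 := by
        have := Padic.norm_int_le_one (p := p) (c : ℤ)
        simpa using this
      calc ‖((c:ℕ) : ℚ_[p])‖ * (p:ℝ)^m ≤ 1 * (p:ℝ)^m :=
            mul_le_mul_of_nonneg_right this (zpow_nonneg hp0.le _)
        _ = (p:ℝ)^m := one_mul _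
    calc ‖x‖ = ‖(x - (c:ℚ_[p]) * (p:ℚ_[p])^(-m)) + (c:ℚ_[p]) * (p:ℚ_[p])^(-m)‖ := by ring_nf
      _ ≤ max ‖x - (c:ℚ_[p]) * (p:ℚ_[p])^(-m)‖ ‖(c:ℚ_[p]) * (p:ℚ_[p])^(-m)‖ :=
          Padic.nonarchimedean _ _
      _ ≤ (p:ℝ)^m := by
          apply max_le (le_trans hxc ?_) h1
          exact zpow_le_zpow_right₀ (hp1R p).le (by omega)

lemma padic_disj (m : ℤ) : Set.PairwiseDisjoint (↑(Finset.range p) : Set ℕ)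
    (fun c => closedBall ((c:ℚ_[p]) * (p:ℚ_[p])^(-m)) ((p:ℝ)^(m-1))) := by
  have hp0 := hp0R p
  intro c hc c' hc' hne
  simp only [Finset.coe_range, Set.mem_Iio] at hc hc'
  rw [Function.onFun, Set.disjoint_left]
  intro x h1 h2
  rw [mem_closedBall, dist_eq_norm] at h1 h2
  have hkey : ‖((c:ℚ_[p]) - (c':ℚ_[p])) * (p:ℚ_[p])^(-m)‖ ≤ (p:ℝ)^(m-1) := by
    have : ((c:ℚ_[p]) - (c':ℚ_[p])) * (p:ℚ_[p])^(-m)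
        = -(x - (c:ℚ_[p]) * (p:ℚ_[p])^(-m)) + (x - (c':ℚ_[p]) * (p:ℚ_[p])^(-m)) := by ring
    rw [this]
    exact le_trans (Padic.nonarchimedean _ _) (max_le (by rwa [norm_neg]) h2)
  rw [norm_mul, Padic.norm_p_zpow, neg_neg] at hkey
  have hcc : ‖(c:ℚ_[p]) - (c':ℚ_[p])‖ = 1 := by
    have hd : ¬ ((p:ℤ) ∣ ((c:ℤ) - (c':ℤ))) := by
      intro ⟨k, hk⟩
      have hp2 : 2 ≤ (p:ℤ) := by exact_mod_cast (Fact.out : p.Prime).two_le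
      have hc1 : (c:ℤ) < p := by exact_mod_cast hc
      have hc2 : (c':ℤ) < p := by exact_mod_cast hc'
      have hne' : (c:ℤ) ≠ (c':ℤ) := by exact_mod_cast hne
      have h0c : (0:ℤ) ≤ (c:ℤ) := Int.natCast_nonneg c
      have h0c' : (0:ℤ) ≤ (c':ℤ) := Int.natCast_nonneg c'
      rcases lt_trichotomy k 0 with h | h | h
      · nlinarith [hk, h, hc1, hc2, h0c, h0c', hp2]
      · rw [h, mul_zero] at hk; exact hne' (by omega)
      · nlinarith [hk, h, hc1, hc2, h0c, h0c', hp2]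
    have hlt := (Padic.norm_intCast_lt_one_iff (p := p) (k := (c:ℤ) - (c':ℤ))).not.2 hd
    have hle : ‖(((c:ℤ) - (c':ℤ) : ℤ) : ℚ_[p])‖ ≤ 1 := Padic.norm_int_le_one _
    push_cast at hlt hle ⊢
    linarith [lt_or_eq_of_le hle, not_lt.1 hlt]
  rw [hcc, one_mul] at hkey
  have : (p:ℝ)^(m-1) < (p:ℝ)^m := zpow_lt_zpow_right₀ (hp1R p) (by omega)
  linarith


lemma padic_key (m : ℤ) : padicHaar p (closedBall (0:ℚ_[p]) ((p:ℝ)^m))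
    = (p : ℝ≥0∞) * padicHaar p (closedBall (0:ℚ_[p]) ((p:ℝ)^(m-1))) := by
  rw [padic_cover p m,
    measure_biUnion_finset (padic_disj p m) (fun c _ => measurableSet_closedBall)]
  have : ∀ c ∈ Finset.range p,
      padicHaar p (closedBall ((c:ℚ_[p]) * (p:ℚ_[p])^(-m)) ((p:ℝ)^(m-1)))
        = padicHaar p (closedBall (0:ℚ_[p]) ((p:ℝ)^(m-1))) :=
    fun c _ => padic_translate p _ _
  rw [Finset.sum_congr rfl this, Finset.sum_const, Finset.card_range, nsmul_eq_mul]

lemma padic_meas_ball (m : ℤ) :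
    padicHaar p (closedBall (0:ℚ_[p]) ((p:ℝ)^m)) = ENNReal.ofReal ((p:ℝ)^m) := by
  have hp0 := hp0R p
  have hcast : (p : ℝ≥0∞) = ENNReal.ofReal (p:ℝ) := by
    rw [ENNReal.ofReal_natCast]
  induction m using Int.induction_on with
  | zero =>
      simp only [zpow_zero, ENNReal.ofReal_one]
      exact Measure.addHaarMeasure_self
  | succ n ih =>
      have hk := padic_key p ((n:ℤ)+1)
      rw [show ((n:ℤ)+1)-1 = (n:ℤ) by ring] at hk
      rw [hk, ih, hcast, ← ENNReal.ofReal_mul hp0.le]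
      congr 1
      rw [mul_comm, ← zpow_add_one₀ (ne_of_gt hp0)]
  | pred n ih =>
      have hk := padic_key p (-(n:ℤ))
      rw [ih] at hk
      have h2 : ENNReal.ofReal ((p:ℝ)^(-(n:ℤ)))
          = (p : ℝ≥0∞) * ENNReal.ofReal ((p:ℝ)^(-(n:ℤ)-1)) := by
        rw [hcast, ← ENNReal.ofReal_mul hp0.le]
        congr 1
        rw [mul_comm, ← zpow_add_one₀ (ne_of_gt hp0)]
        ring_nf
      rw [h2] at hk
      exact ((ENNReal.mul_right_inj (by exact_mod_cast (Fact.out : p.Prime).ne_zero)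
        (ENNReal.natCast_ne_top p)).1 hk).symm

end Aux

lemma sphere_term_real {P : ℝ} (hP : 1 < P) (α x : ℝ) :
    (1/(P^x)^(1+α)) * (P^x - P^(x-1)) = (1-P⁻¹) * P^(-α*x) := by
  have hp0 : (0:ℝ) < P := lt_trans one_pos hP
  have e1 : -(x*(1+α)) + x = -α*x := by ring
  have e2 : -(x*(1+α)) + (x-1) = -α*x + -1 := by ring
  calc (1/(P^x)^(1+α)) * (P^x - P^(x-1))
      = P^(-(x*(1+α))) * P^x - P^(-(x*(1+α))) * P^(x-1) := by
        rw [← Real.rpow_mul hp0.le, one_div, ← Real.rpow_neg hp0.le, mul_sub]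
    _ = P^(-(x*(1+α)) + x) - P^(-(x*(1+α)) + (x-1)) := by
        rw [← Real.rpow_add hp0, ← Real.rpow_add hp0]
    _ = (1-P⁻¹) * P^(-α*x) := by
        rw [e1, e2, Real.rpow_add hp0, Real.rpow_neg_one]; ring

section Tail
variable (p : ℕ) [Fact p.Prime] (N : ℤ)

def padicAnn (k : ℕ) : Set ℚ_[p] :=
  closedBall 0 ((p:ℝ)^(N+1+(k:ℤ))) \ closedBall 0 ((p:ℝ)^(N+(k:ℤ)))

lemma padicAnn_meas (k : ℕ) : MeasurableSet (padicAnn p N k) :=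
  measurableSet_closedBall.diff measurableSet_closedBall

lemma padic_norm_on_ann (k : ℕ) (y : ℚ_[p]) (hy : y ∈ padicAnn p N k) :
    ‖y‖ = (p:ℝ)^(N+1+(k:ℤ)) := by
  obtain ⟨h1, h2⟩ := hy
  rw [mem_closedBall, dist_eq_norm, sub_zero] at h1 h2
  have h3 : ¬ ‖y‖ < (p:ℝ)^(N+(k:ℤ)+1) :=
    (Padic.norm_le_pow_iff_norm_lt_pow_add_one y (N+(k:ℤ))).not.1 h2
  have h4 : (p:ℝ)^(N+(k:ℤ)+1) ≤ ‖y‖ := not_lt.1 h3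
  have he : N+(k:ℤ)+1 = N+1+(k:ℤ) := by ring
  rw [he] at h4
  exact le_antisymm h1 h4

lemma padic_ann_disj : Pairwise (Function.onFun Disjoint (padicAnn p N)) := by
  intro j k hjk
  rw [Function.onFun, Set.disjoint_left]
  intro y hyj hyk
  have h1 := padic_norm_on_ann p N j y hyj
  have h2 := padic_norm_on_ann p N k y hyk
  rw [h1] at h2
  have := (zpow_right_strictMono₀ (hp1R p)).injective h2
  omega

lemma padic_ann_measure (k : ℕ) :
    padicHaar p (padicAnn p N k)
      = ENNReal.ofReal ((p:ℝ)^(N+1+(k:ℤ)) - (p:ℝ)^(N+(k:ℤ))) := by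
  have hsub : closedBall (0:ℚ_[p]) ((p:ℝ)^(N+(k:ℤ))) ⊆ closedBall 0 ((p:ℝ)^(N+1+(k:ℤ))) :=
    closedBall_subset_closedBall (zpow_le_zpow_right₀ (hp1R p).le (by omega))
  rw [padicAnn, measure_diff hsub measurableSet_closedBall.nullMeasurableSet
      (by rw [padic_meas_ball]; exact ENNReal.ofReal_ne_top),
    padic_meas_ball, padic_meas_ball]
  exact (ENNReal.ofReal_sub _ (zpow_nonneg (hp0R p).le _)).symm

lemma padic_tail_eq :
    {y : ℚ_[p] | (p:ℝ)^N < ‖y‖} = ⋃ k : ℕ, padicAnn p N k := by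
  ext y
  simp only [Set.mem_setOf_eq, Set.mem_iUnion]
  constructor
  · intro hy
    have hy0 : y ≠ 0 := by
      intro h
      rw [h, norm_zero] at hy
      exact absurd hy (not_lt.2 (zpow_nonneg (hp0R p).le _))
    have hnv := Padic.norm_eq_zpow_neg_valuation hy0
    set m : ℤ := -y.valuation with hm
    rw [hnv] at hy
    have hNm : N < m := (zpow_lt_zpow_iff_right₀ (hp1R p)).1 hy
    refine ⟨(m - (N+1)).toNat, ?_, ?_⟩
    · rw [mem_closedBall, dist_eq_norm, sub_zero, hnv]
      exact zpow_le_zpow_right₀ (hp1R p).le (by omega)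
    · rw [mem_closedBall, dist_eq_norm, sub_zero, hnv, not_le]
      exact zpow_lt_zpow_right₀ (hp1R p) (by omega)
  · rintro ⟨k, hk⟩
    have := padic_norm_on_ann p N k y hk
    rw [this]
    exact zpow_lt_zpow_right₀ (hp1R p) (by omega)

lemma padic_tail_lintegral (α : ℝ) (hα : 0 < α) :
    ∫⁻ y in {y : ℚ_[p] | (p:ℝ)^N < ‖y‖}, ENNReal.ofReal (1/‖y‖^(1+α)) ∂padicHaar p
      = ENNReal.ofReal ((1 - (p:ℝ)⁻¹) * (p:ℝ)^(-(α*((N:ℝ)+1))) * (1 - (p:ℝ)^(-α))⁻¹) := by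
  have hp1 := hp1R p
  have hp0 := hp0R p
  have hr0 : (0:ℝ) ≤ (p:ℝ)^(-α) := Real.rpow_nonneg hp0.le _
  have hr1 : (p:ℝ)^(-α) < 1 := Real.rpow_lt_one_of_one_lt_of_neg hp1 (by linarith)
  have hc00 : (0:ℝ) ≤ (1 - (p:ℝ)⁻¹) * (p:ℝ)^(-(α*((N:ℝ)+1))) := by
    apply mul_nonneg _ (Real.rpow_nonneg hp0.le _)
    have : (p:ℝ)⁻¹ ≤ 1 := by
      rw [inv_le_one_iff₀]; right; exact hp1.le
    linarith
  rw [padic_tail_eq, lintegral_iUnion (padicAnn_meas p N) (padic_ann_disj p N)]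
  have hterm : ∀ k : ℕ, ∫⁻ y in padicAnn p N k, ENNReal.ofReal (1/‖y‖^(1+α)) ∂padicHaar p
      = ENNReal.ofReal (((1 - (p:ℝ)⁻¹) * (p:ℝ)^(-(α*((N:ℝ)+1)))) * ((p:ℝ)^(-α))^k) := by
    intro k
    rw [setLIntegral_congr_fun (padicAnn_meas p N k)
        (fun y hy => by rw [padic_norm_on_ann p N k y hy]),
      setLIntegral_const, padic_ann_measure p N k]
    have hx1 : ((p:ℝ)^(N+1+(k:ℤ))) = (p:ℝ)^(((N:ℝ)+1+(k:ℕ)) : ℝ) := by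
      rw [← Real.rpow_intCast (p:ℝ) (N+1+(k:ℤ))]
      congr 1
      push_cast; ring
    have hx2 : ((p:ℝ)^(N+(k:ℤ))) = (p:ℝ)^((((N:ℝ)+1+(k:ℕ)) - 1) : ℝ) := by
      rw [← Real.rpow_intCast (p:ℝ) (N+(k:ℤ))]
      congr 1
      push_cast; ring
    rw [hx1, hx2, ← ENNReal.ofReal_mul (by positivity),
      sphere_term_real hp1 α ((N:ℝ)+1+(k:ℕ))]
    congr 1
    have he : -α*((N:ℝ)+1+(k:ℕ)) = -(α*((N:ℝ)+1)) + (-α)*((k:ℕ):ℝ) := by ring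
    rw [he, Real.rpow_add hp0, Real.rpow_mul hp0.le, Real.rpow_natCast]
    ring
  rw [tsum_congr hterm]
  calc ∑' (k:ℕ), ENNReal.ofReal (((1 - (p:ℝ)⁻¹) * (p:ℝ)^(-(α*((N:ℝ)+1)))) * ((p:ℝ)^(-α))^k)
      = ENNReal.ofReal (∑' (k:ℕ), ((1 - (p:ℝ)⁻¹) * (p:ℝ)^(-(α*((N:ℝ)+1)))) * ((p:ℝ)^(-α))^k) := by
        refine (ENNReal.ofReal_tsum_of_nonneg (fun k => ?_)
          ((summable_geometric_of_lt_one hr0 hr1).mul_left _)).symm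
        exact mul_nonneg hc00 (pow_nonneg hr0 _)
    _ = ENNReal.ofReal ((1 - (p:ℝ)⁻¹) * (p:ℝ)^(-(α*((N:ℝ)+1))) * (1 - (p:ℝ)^(-α))⁻¹) := by
        rw [tsum_mul_left, tsum_geometric_of_lt_one hr0 hr1]

end Tail

def padicI0 (p : ℕ) (α : ℝ) (N : ℤ) : ℝ :=
  (1 - (p:ℝ)⁻¹) * (p:ℝ)^(-(α*((N:ℝ)+1))) * (1 - (p:ℝ)^(-α))⁻¹

section Main
variable (p : ℕ) [Fact p.Prime]

lemma padicI0_nonneg (α : ℝ) (hα : 0 < α) (N : ℤ) : 0 ≤ padicI0 p α N := by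
  have hp1 := hp1R p
  have hp0 := hp0R p
  have hr1 : (p:ℝ)^(-α) < 1 := Real.rpow_lt_one_of_one_lt_of_neg hp1 (by linarith)
  have hinv : (p:ℝ)⁻¹ ≤ 1 := by rw [inv_le_one_iff₀]; right; exact hp1.le
  apply mul_nonneg (mul_nonneg (by linarith) (Real.rpow_nonneg hp0.le _))
  rw [inv_nonneg]
  linarith

lemma padic_g0_meas (α : ℝ) (hα : 0 < α) :
    Measurable (fun y : ℚ_[p] => 1/‖y‖^(1+α)) := by
  apply Measurable.div measurable_const
  exact ((Real.continuous_rpow_const (by linarith)).comp continuous_norm).measurable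

lemma padic_tail_integrableOn (α : ℝ) (hα : 0 < α) (N : ℤ) :
    IntegrableOn (fun y : ℚ_[p] => 1/‖y‖^(1+α))
      {y : ℚ_[p] | (p:ℝ)^N < ‖y‖} (padicHaar p) := by
  refine ⟨(padic_g0_meas p α hα).aestronglyMeasurable, ?_⟩
  rw [hasFiniteIntegral_iff_ofReal (ae_of_all _ fun y => by positivity)]
  rw [padic_tail_lintegral p N α hα]
  exact ENNReal.ofReal_lt_top

lemma padic_tail_integral (α : ℝ) (hα : 0 < α) (N : ℤ) :
    ∫ y in {y : ℚ_[p] | (p:ℝ)^N < ‖y‖}, 1/‖y‖^(1+α) ∂padicHaar p = padicI0 p α N := by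
  rw [integral_eq_lintegral_of_nonneg_ae (ae_of_all _ fun y => by positivity)
      ((padic_g0_meas p α hα).aestronglyMeasurable),
    padic_tail_lintegral p N α hα,
    ENNReal.toReal_ofReal]
  · rfl
  · exact padicI0_nonneg p α hα N

lemma padic_c1a_I0 (α : ℝ) (hα : 0 < α) (N : ℤ) :
    c1a p α * padicI0 p α N = lamN p α N := by
  have hp1 := hp1R p
  have hp0 := hp0R p
  have hr1 : (p:ℝ)^(-α) < 1 := Real.rpow_lt_one_of_one_lt_of_neg hp1 (by linarith)
  have hr1' : (p:ℝ)^(-α-1) < 1 := Real.rpow_lt_one_of_one_lt_of_neg hp1 (by linarith)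
  have h3 : 1 - (p:ℝ)^(-α) ≠ 0 := by intro h; linarith [h]
  have h2 : 1 - (p:ℝ)^(-α-1) ≠ 0 := by intro h; linarith [h]
  have hsplit : (p:ℝ)^(-(α*((N:ℝ)+1))) = (p:ℝ)^(-α*(N:ℝ)) * (p:ℝ)^(-α) := by
    rw [← Real.rpow_add hp0]; congr 1; ring
  have h1 : ((p:ℝ)^α - 1) * (p:ℝ)^(-α) = 1 - (p:ℝ)^(-α) := by
    rw [sub_mul, ← Real.rpow_add hp0, add_neg_cancel, Real.rpow_zero, one_mul]
  have h4 : ((p:ℝ)^α - 1) * (p:ℝ)^(-α) * (1 - (p:ℝ)^(-α))⁻¹ = 1 := by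
    rw [h1, mul_inv_cancel₀ h3]
  calc c1a p α * padicI0 p α N
      = (((p:ℝ)^α - 1) * (p:ℝ)^(-α) * (1 - (p:ℝ)^(-α))⁻¹)
        * ((1 - (p:ℝ)⁻¹) * (p:ℝ)^(-α*(N:ℝ)) / (1 - (p:ℝ)^(-α-1))) := by
        unfold c1a padicI0
        rw [hsplit]
        ring
    _ = (1 - (p:ℝ)⁻¹) * (p:ℝ)^(-α*(N:ℝ)) / (1 - (p:ℝ)^(-α-1)) := by rw [h4, one_mul]
    _ = lamN p α N := by
        unfold lamN
        field_simp

end Main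

/-- For `u : ℚ_p → ℝ` bounded, measurable and locally constant on `B_N`,
and `x ∈ B_N`, all integrals below converge absolutely and
`(D^{α,1}u)(x) = c_{1,α} ∫_{B_N} (u(x)−u(y))/|x−y|^{1+α} dy + λ_N u(x)
  − c_{1,α} ∫_{|y|>p^N} u(y)/|y|^{1+α} dy`. -/
theorem padic_vladimirov_decomposition (p : ℕ) [Fact p.Prime] (α : ℝ) (hα : 0 < α) (N : ℤ)
    (u : ℚ_[p] → ℝ) (humeas : Measurable u)
    (hubdd : ∃ C : ℝ, ∀ x, |u x| ≤ C)
    (huloc : ∃ ℓ : ℤ, ∀ x ∈ Bball1 p N, ∀ x' : ℚ_[p],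
      ‖x'‖ ≤ (p : ℝ) ^ (-ℓ) → u (x + x') = u x) :
    ∀ x ∈ Bball1 p N,
      Integrable (fun y => (u x - u y) / ‖x - y‖ ^ (1 + α)) (padicHaar p) ∧
      IntegrableOn (fun y => (u x - u y) / ‖x - y‖ ^ (1 + α)) (Bball1 p N) (padicHaar p) ∧
      IntegrableOn (fun y => u y / ‖y‖ ^ (1 + α))
        {y : ℚ_[p] | (p : ℝ) ^ N < ‖y‖} (padicHaar p) ∧
      Dop1 p α u x
        = c1a p α * (∫ y in Bball1 p N, (u x - u y) / ‖x - y‖ ^ (1 + α) ∂padicHaar p)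
          + lamN p α N * u x
          - c1a p α * ∫ y in {y : ℚ_[p] | (p : ℝ) ^ N < ‖y‖},
              u y / ‖y‖ ^ (1 + α) ∂padicHaar p := by
  obtain ⟨C, hC⟩ := hubdd
  obtain ⟨ℓ, hℓ⟩ := huloc
  have hC0 : 0 ≤ C := le_trans (abs_nonneg _) (hC 0)
  have hp1 := hp1R p
  have hp0 := hp0R p
  have h1α : (0:ℝ) < 1 + α := by linarith
  intro x hx
  have hxn : ‖x‖ ≤ (p:ℝ)^N := hx
  set T : Set ℚ_[p] := {y : ℚ_[p] | (p:ℝ)^N < ‖y‖} with hT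
  set f : ℚ_[p] → ℝ := fun y => (u x - u y) / ‖x - y‖ ^ (1 + α) with hf
  have hBeq : Bball1 p N = closedBall (0:ℚ_[p]) ((p:ℝ)^N) := by
    ext y; simp [Bball1, mem_closedBall, dist_eq_norm]
  have hBmeas : MeasurableSet (Bball1 p N) := by rw [hBeq]; exact measurableSet_closedBall
  have hTc : (Bball1 p N)ᶜ = T := by
    ext y; simp [Bball1, hT, not_le]
  have hTmeas : MeasurableSet T := by rw [← hTc]; exact hBmeas.compl
  have hfmeas : Measurable f := by
    apply Measurable.div (measurable_const.sub humeas)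
    exact ((Real.continuous_rpow_const h1α.le).comp
      ((continuous_const.sub continuous_id).norm)).measurable
  have humeas' : Measurable (fun y : ℚ_[p] => u y / ‖y‖^(1+α)) := by
    apply Measurable.div humeas
    exact ((Real.continuous_rpow_const h1α.le).comp continuous_norm).measurable
  have hnormT : ∀ y ∈ T, ‖x - y‖ = ‖y‖ := by
    intro y hy
    have hyT : (p:ℝ)^N < ‖y‖ := hy
    have hxy : ‖x‖ < ‖y‖ := lt_of_le_of_lt hxn hyT
    rw [sub_eq_add_neg, Padic.add_eq_max_of_ne (by rw [norm_neg]; exact ne_of_lt hxy),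
      norm_neg]
    exact max_eq_right hxy.le
  have hnormTpos : ∀ y ∈ T, (0:ℝ) < ‖y‖^(1+α) := by
    intro y hy
    have hyT : (p:ℝ)^N < ‖y‖ := hy
    have : (0:ℝ) < ‖y‖ := lt_of_le_of_lt (zpow_nonneg hp0.le _) hyT
    positivity
  -- global bound on f
  set M : ℝ := 2*C / ((p:ℝ)^(-ℓ))^(1+α) with hM
  have hM0 : 0 ≤ M := by
    apply div_nonneg (by linarith)
    positivity
  have hfbound : ∀ y, |f y| ≤ M := by
    intro y
    by_cases hcase : ‖y - x‖ ≤ (p:ℝ)^(-ℓ)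
    · have huy : u y = u x := by
        have := hℓ x hx (y - x) hcase
        rwa [add_sub_cancel] at this
      rw [hf]
      simp only [huy, sub_self, zero_div, abs_zero]
      exact hM0
    · push_neg at hcase
      have hD0 : (0:ℝ) < ((p:ℝ)^(-ℓ))^(1+α) := by positivity
      have hDle : ((p:ℝ)^(-ℓ))^(1+α) ≤ ‖x - y‖^(1+α) := by
        rw [norm_sub_rev]
        exact Real.rpow_le_rpow (zpow_nonneg hp0.le _) hcase.le h1α.le
      have habs : |u x - u y| ≤ 2*C := by
        calc |u x - u y| ≤ |u x| + |u y| := abs_sub _ _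
          _ ≤ 2*C := by linarith [hC x, hC y]
      rw [hf]
      simp only [abs_div, abs_of_nonneg (by positivity : (0:ℝ) ≤ ‖x - y‖^(1+α))]
      exact div_le_div₀ (by linarith) habs hD0 hDle
  -- integrability on B_N
  have hmuB : padicHaar p (Bball1 p N) ≠ ∞ := by
    rw [hBeq, padic_meas_ball]; exact ENNReal.ofReal_ne_top
  have hintB : IntegrableOn f (Bball1 p N) (padicHaar p) := by
    apply Measure.integrableOn_of_bounded hmuB hfmeas.aestronglyMeasurable
    exact ae_of_all _ fun y => by rw [Real.norm_eq_abs]; exact hfbound y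
  -- integrability of 1/‖y‖^(1+α) on T
  have hintg0 : IntegrableOn (fun y : ℚ_[p] => 1/‖y‖^(1+α)) T (padicHaar p) :=
    padic_tail_integrableOn p α hα N
  -- integrability of u y / ‖y‖^(1+α) on T
  have hintuT : IntegrableOn (fun y => u y / ‖y‖^(1+α)) T (padicHaar p) := by
    apply Integrable.mono' (hintg0.integrable.const_mul C) humeas'.aestronglyMeasurable
    rw [ae_restrict_iff' hTmeas]
    apply ae_of_all
    intro y hy
    rw [Real.norm_eq_abs, abs_div, abs_of_nonneg (hnormTpos y hy).le, mul_one_div]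
    gcongr
    exact hC y
  -- integrability of f on T
  have hintfT : IntegrableOn f T (padicHaar p) := by
    apply Integrable.mono' (hintg0.integrable.const_mul (2*C)) hfmeas.aestronglyMeasurable
    rw [ae_restrict_iff' hTmeas]
    apply ae_of_all
    intro y hy
    rw [Real.norm_eq_abs, hf]
    simp only [hnormT y hy, abs_div, abs_of_nonneg (hnormTpos y hy).le, mul_one_div]
    gcongr
    calc |u x - u y| ≤ |u x| + |u y| := abs_sub _ _
        _ ≤ 2*C := by linarith [hC x, hC y]
  -- global integrability
  have hint : Integrable f (padicHaar p) := by
    rw [← integrableOn_univ]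
    have huniv : (Set.univ : Set ℚ_[p]) = Bball1 p N ∪ T := by
      ext y
      simp only [Set.mem_univ, Set.mem_union, true_iff, Bball1, hT, Set.mem_setOf_eq]
      exact le_or_gt ‖y‖ ((p:ℝ)^N)
    rw [huniv]
    exact hintB.union hintfT
  refine ⟨hint, hintB, hintuT, ?_⟩
  -- the tail integral of f
  have hTint : ∫ y in T, f y ∂padicHaar p
      = u x * padicI0 p α N - ∫ y in T, u y / ‖y‖^(1+α) ∂padicHaar p := by
    have hEq : Set.EqOn f (fun y => u x * (1/‖y‖^(1+α)) - u y / ‖y‖^(1+α)) T := by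
      intro y hy
      rw [hf]
      simp only [hnormT y hy, sub_div, mul_one_div]
    rw [setIntegral_congr_fun hTmeas hEq,
      integral_sub (hintg0.integrable.const_mul (u x)) hintuT,
      integral_const_mul, padic_tail_integral p α hα N]
  have hDop : Dop1 p α u x = c1a p α * ((∫ y in Bball1 p N, f y ∂padicHaar p)
      + (u x * padicI0 p α N - ∫ y in T, u y / ‖y‖^(1+α) ∂padicHaar p)) := by
    rw [Dop1]
    congr 1
    rw [← integral_add_compl hBmeas hint, hTc, hTint]
  rw [hDop, ← padic_c1a_I0 p α hα N]
  ring
end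
end

section
/- Let p be a prime, α > 0, N ∈ ℤ, and let u : ℚ_p → ℝ be measurable and integrable on B_N. Then (N_α u)(x) = 0 for all x with |x|_p > p^N if and only if u(y) = p^{−N} ∫_{B_N} u(z) dz for all y with |y|_p > p^N; that is, u satisfies the homogeneous Neumann condition exactly when u is equal, everywhere outside B_N, to the constant given by its average over B_N. -/
noncomputable section

open MeasureTheory Metric ENNReal

namespace NeumannAux

variable (p : ℕ) [hp : Fact p.Prime]

instance : (padicHaar p).IsAddHaarMeasure :=
  Measure.isAddHaarMeasure_addHaarMeasure _

lemma padicHaar_unitBall : padicHaar p (Metric.closedBall 0 1) = 1 :=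
  Measure.addHaarMeasure_self (K₀ := padicUnitBall p)

lemma padicHaar_closedBall_eq (c : ℚ_[p]) (r : ℝ) :
    padicHaar p (closedBall c r) = padicHaar p (closedBall 0 r) := by
  have h := measure_preimage_add (padicHaar p) c (closedBall c r)
  rw [← h]
  congr 1
  ext x
  simp [mem_closedBall, dist_eq_norm]

lemma one_lt_pR : (1 : ℝ) < (p : ℝ) := by
  exact_mod_cast hp.out.one_lt

lemma ball_decomp (n : ℤ) :
    closedBall (0 : ℚ_[p]) ((p : ℝ) ^ n) =
      ⋃ i ∈ Finset.range p, closedBall ((i : ℚ_[p]) * (p : ℚ_[p]) ^ (-n)) ((p : ℝ) ^ (n - 1)) := by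
  have hp0 : ((p : ℚ_[p])) ≠ 0 := by
    exact_mod_cast hp.out.ne_zero
  ext x
  simp only [Set.mem_iUnion, Finset.mem_range, mem_closedBall, dist_zero_right, dist_eq_norm,
    sub_zero]
  have hpr0 : (p : ℝ) ≠ 0 := Nat.cast_ne_zero.mpr hp.out.ne_zero
  constructor
  · intro hx
    set z : ℚ_[p] := x * (p : ℚ_[p]) ^ n with hz
    have hznorm : ‖z‖ ≤ 1 := by
      rw [hz, norm_mul, Padic.norm_p_zpow]
      calc ‖x‖ * (p : ℝ) ^ (-n) ≤ (p : ℝ) ^ n * (p : ℝ) ^ (-n) := by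
            apply mul_le_mul_of_nonneg_right hx
            positivity
        _ = 1 := by
            rw [← zpow_add₀ hpr0]
            simp
    set w : ℤ_[p] := ⟨z, hznorm⟩ with hw
    refine ⟨PadicInt.zmodRepr w, PadicInt.zmodRepr_lt_p w, ?_⟩
    have hmem := PadicInt.sub_zmodRepr_mem w
    rw [PadicInt.maximalIdeal_eq_span_p, ← pow_one (p : ℤ_[p]), ←
      PadicInt.norm_le_pow_iff_mem_span_pow] at hmem
    have hcoe : ‖(w - (PadicInt.zmodRepr w : ℤ_[p]) : ℤ_[p])‖ = ‖z - (PadicInt.zmodRepr w : ℚ_[p])‖ := by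
      rw [PadicInt.norm_def]
      push_cast
      rfl
    rw [hcoe] at hmem
    have hxz : x - (PadicInt.zmodRepr w : ℚ_[p]) * (p : ℚ_[p]) ^ (-n) =
        (z - (PadicInt.zmodRepr w : ℚ_[p])) * (p : ℚ_[p]) ^ (-n) := by
      rw [hz, sub_mul, mul_assoc, ← zpow_add₀ hp0]
      simp
    rw [hxz, norm_mul, Padic.norm_p_zpow]
    calc ‖z - (PadicInt.zmodRepr w : ℚ_[p])‖ * (p : ℝ) ^ (- -n)
        ≤ (p : ℝ) ^ (-(1:ℤ)) * (p : ℝ) ^ (- -n) := by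
          apply mul_le_mul_of_nonneg_right _ (by positivity)
          exact_mod_cast hmem
      _ = (p : ℝ) ^ (n - 1) := by
          rw [← zpow_add₀ hpr0]
          ring_nf
  · rintro ⟨i, hi, hxi⟩
    have hcenter : ‖(i : ℚ_[p]) * (p : ℚ_[p]) ^ (-n)‖ ≤ (p : ℝ) ^ n := by
      rw [norm_mul, Padic.norm_p_zpow, neg_neg]
      calc ‖(i : ℚ_[p])‖ * (p : ℝ) ^ n ≤ 1 * (p : ℝ) ^ n := by
            apply mul_le_mul_of_nonneg_right _ (by positivity)
            exact_mod_cast Padic.norm_int_le_one (i : ℤ)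
        _ = (p : ℝ) ^ n := one_mul _
    have : x = (x - (i : ℚ_[p]) * (p : ℚ_[p]) ^ (-n)) + (i : ℚ_[p]) * (p : ℚ_[p]) ^ (-n) := by ring
    rw [this]
    refine le_trans (Padic.nonarchimedean _ _) (max_le (le_trans hxi ?_) hcenter)
    apply zpow_le_zpow_right₀ (le_of_lt (one_lt_pR p))
    omega

lemma padicHaar_ball_step (n : ℤ) :
    padicHaar p (closedBall (0 : ℚ_[p]) ((p : ℝ) ^ n)) =
      (p : ℝ≥0∞) * padicHaar p (closedBall (0 : ℚ_[p]) ((p : ℝ) ^ (n - 1))) := by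
  rw [ball_decomp p n]
  rw [measure_biUnion_finset ?hd (fun i _ => measurableSet_closedBall)]
  · simp only [padicHaar_closedBall_eq]
    rw [Finset.sum_const, Finset.card_range, nsmul_eq_mul]
  case hd =>
    intro i hi j hj hij
    simp only [Finset.mem_coe, Finset.mem_range] at hi hj
    simp only [Function.onFun]
    rw [Set.disjoint_left]
    intro x hxi hxj
    rw [mem_closedBall, dist_eq_norm] at hxi hxj
    have hdiff : ‖((i : ℚ_[p]) - (j : ℚ_[p])) * (p : ℚ_[p]) ^ (-n)‖ = (p : ℝ) ^ n := by
      rw [norm_mul, Padic.norm_p_zpow, neg_neg]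
      have h1 : ‖((i : ℚ_[p]) - (j : ℚ_[p]))‖ = 1 := by
        have : ((i : ℚ_[p]) - (j : ℚ_[p])) = (((i : ℤ) - (j : ℤ) : ℤ) : ℚ_[p]) := by push_cast; ring
        rw [this]
        have hle := Padic.norm_int_le_one (p := p) ((i : ℤ) - (j : ℤ))
        have hnd : ¬ ((p : ℤ) ∣ ((i : ℤ) - (j : ℤ))) := by
          intro hdvd
          have h2 : p ∣ ((i : ℤ) - (j : ℤ)).natAbs :=
            Int.natAbs_dvd_natAbs.mpr (by simpa using hdvd)
          have h3 : ((i : ℤ) - (j : ℤ)).natAbs < p := by omega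
          have h4 : 0 < ((i : ℤ) - (j : ℤ)).natAbs := by omega
          exact absurd (Nat.le_of_dvd h4 h2) (by omega)
        have hnlt := (Padic.norm_intCast_lt_one_iff (p := p) (k := (i : ℤ) - (j : ℤ))).not.mpr hnd
        exact le_antisymm hle (not_lt.mp hnlt)
      rw [h1, one_mul]
    have hlt : (p : ℝ) ^ n ≤ (p : ℝ) ^ (n - 1) := by
      calc (p : ℝ) ^ n = ‖((i : ℚ_[p]) - (j : ℚ_[p])) * (p : ℚ_[p]) ^ (-n)‖ := hdiff.symm
        _ = ‖((i : ℚ_[p]) * (p : ℚ_[p]) ^ (-n) - x) + (x - (j : ℚ_[p]) * (p : ℚ_[p]) ^ (-n))‖ := by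
            ring_nf
        _ ≤ max ‖(i : ℚ_[p]) * (p : ℚ_[p]) ^ (-n) - x‖ ‖x - (j : ℚ_[p]) * (p : ℚ_[p]) ^ (-n)‖ :=
            Padic.nonarchimedean _ _
        _ ≤ (p : ℝ) ^ (n - 1) := by
            rw [max_le_iff]
            constructor
            · rw [norm_sub_rev]; exact hxi
            · exact hxj
    have : (p : ℝ) ^ (n - 1) < (p : ℝ) ^ n := by
      apply zpow_lt_zpow_right₀ (one_lt_pR p)
      omega
    linarith

lemma padicHaar_ball (n : ℤ) :
    padicHaar p (closedBall (0 : ℚ_[p]) ((p : ℝ) ^ n)) = (p : ℝ≥0∞) ^ n := by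
  have hp0 : (p : ℝ≥0∞) ≠ 0 := by
    simp [hp.out.ne_zero]
  have hptop : (p : ℝ≥0∞) ≠ ∞ := by simp
  induction n using Int.induction_on with
  | zero => simpa using padicHaar_unitBall p
  | succ n ih =>
      have := padicHaar_ball_step p (n + 1)
      simp only [add_sub_cancel_right] at this
      rw [this, ih, show ((n : ℤ) + 1) = 1 + n by ring, ENNReal.zpow_add hp0 hptop 1 n, zpow_one]
  | pred n ih =>
      have hstep := padicHaar_ball_step p (-(n : ℤ))
      rw [ih] at hstep
      apply (ENNReal.mul_right_inj hp0 hptop).mp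
      rw [← hstep]
      have h2 : ((p:ℝ≥0∞)) * p ^ (-(n:ℤ) - 1) = p ^ (1 + (-(n:ℤ) - 1)) := by
        rw [ENNReal.zpow_add hp0 hptop, zpow_one]
      rw [h2]
      congr 1
      ring

lemma Bball1_eq (N : ℤ) : Bball1 p N = closedBall (0 : ℚ_[p]) ((p : ℝ) ^ N) := by
  ext x; simp [Bball1, mem_closedBall, dist_zero_right]

lemma padicHaar_Bball1 (N : ℤ) : padicHaar p (Bball1 p N) = (p : ℝ≥0∞) ^ N := by
  rw [Bball1_eq, padicHaar_ball]

lemma padicHaar_Bball1_lt_top (N : ℤ) : padicHaar p (Bball1 p N) < ∞ := by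
  rw [Bball1_eq]
  exact (isCompact_closedBall _ _).measure_lt_top

lemma padicHaar_Bball1_toReal (N : ℤ) :
    (padicHaar p (Bball1 p N)).toReal = (p : ℝ) ^ N := by
  have hpn0 : ((p : NNReal)) ≠ 0 := Nat.cast_ne_zero.mpr hp.out.ne_zero
  rw [padicHaar_Bball1, show ((p : ℝ≥0∞)) = ((p : NNReal) : ℝ≥0∞) by simp,
    ← ENNReal.coe_zpow hpn0, ENNReal.coe_toReal]
  push_cast
  ring

end NeumannAux

/-- `u` satisfies the homogeneous Neumann condition `N_α u = 0` outside
`B_N` if and only if, outside `B_N`, `u` equals the constant `p^{−N} ∫_{B_N} u(z) dz`. -/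
theorem padic_homogeneous_neumann_iff (p : ℕ) [Fact p.Prime] (α : ℝ) (hα : 0 < α) (N : ℤ)
    (u : ℚ_[p] → ℝ) (humeas : Measurable u)
    (huint : IntegrableOn u (Bball1 p N) (padicHaar p)) :
    (∀ x : ℚ_[p], (p : ℝ) ^ N < ‖x‖ → Nop1 p α N u x = 0) ↔
      (∀ y : ℚ_[p], (p : ℝ) ^ N < ‖y‖ →
        u y = (p : ℝ) ^ (-N) * ∫ z in Bball1 p N, u z ∂padicHaar p) := by
  have hp1 : (1 : ℝ) < (p : ℝ) := NeumannAux.one_lt_pR p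
  have hppos : (0 : ℝ) < (p : ℝ) := lt_trans one_pos hp1
  have hpN : ((p : ℝ) ^ N) ≠ 0 := (zpow_pos hppos N).ne'
  have hmeasB : MeasurableSet (Bball1 p N) := by
    rw [NeumannAux.Bball1_eq]; exact measurableSet_closedBall
  have hc : 0 < c1a p α := by
    unfold c1a
    apply div_pos
    · have h1 : 1 < (p : ℝ) ^ α :=
        (Real.one_lt_rpow_iff_of_pos hppos).mpr (Or.inl ⟨hp1, hα⟩)
      linarith
    · have h2 : (p : ℝ) ^ (-α - 1) < 1 :=
        Real.rpow_lt_one_of_one_lt_of_neg hp1 (by linarith)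
      linarith
  set I : ℝ := ∫ z in Bball1 p N, u z ∂padicHaar p with hI
  have key : ∀ x : ℚ_[p], (p : ℝ) ^ N < ‖x‖ →
      Nop1 p α N u x = c1a p α * (((p : ℝ) ^ N * u x - I) / ‖x‖ ^ (1 + α)) := by
    intro x hx
    unfold Nop1
    congr 1
    have hnorm : ∀ y ∈ Bball1 p N, ‖x - y‖ = ‖x‖ := by
      intro y hy
      have hy' : ‖y‖ < ‖x‖ := lt_of_le_of_lt hy hx
      have hne : ‖x‖ ≠ ‖-y‖ := by rw [norm_neg]; exact (ne_of_lt hy').symm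
      rw [sub_eq_add_neg, Padic.add_eq_max_of_ne hne, norm_neg,
        max_eq_left (le_of_lt hy')]
    rw [setIntegral_congr_fun hmeasB
      (g := fun y => (u x - u y) / ‖x‖ ^ (1 + α)) (fun y hy => by rw [hnorm y hy]),
      integral_div, integral_sub
        (integrableOn_const (C := u x) (NeumannAux.padicHaar_Bball1_lt_top p N).ne) huint,
      setIntegral_const, measureReal_def, NeumannAux.padicHaar_Bball1_toReal, smul_eq_mul]
  constructor
  · intro h y hy
    have h0 := h y hy
    rw [key y hy] at h0
    have hynorm : (0 : ℝ) < ‖y‖ := lt_trans (zpow_pos hppos N) hy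
    have hpow : (0 : ℝ) < ‖y‖ ^ (1 + α) := Real.rpow_pos_of_pos hynorm _
    have h1 : (p : ℝ) ^ N * u y - I = 0 := by
      rcases mul_eq_zero.mp h0 with h' | h'
      · exact absurd h' (ne_of_gt hc)
      · exact (div_eq_zero_iff.mp h').resolve_right (ne_of_gt hpow)
    have h2 : (p : ℝ) ^ N * u y = I := by linarith
    rw [zpow_neg, ← h2, inv_mul_cancel_left₀ hpN]
  · intro h x hx
    rw [key x hx, h x hx, zpow_neg, ← mul_assoc, mul_inv_cancel₀ hpN, one_mul]
    simp
end
end
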